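/- arXiv:math/0305034 — 4 statements merged into one kernel-verified Lean document; each statement's English description precedes it below -/
import Mathlib

section
/- Let A be a commutative ring, B an A-algebra, b ∈ B a regular element, a ∈ A, and R_2 = B[T]/(bT - a). Then the first Fitting ideal of the R_2-module Ω^1_{R_2/A} equals the ideal generated by (the images of) b and T. -/
open Polynomial

/-- The `k`-th Fitting ideal of an `R`-module `M`: for any surjection
`f : Rⁿ → M`, it is the ideal generated by the `(n-k) × (n-k)` minors of matrices
whose columns are relations (elements of the kernel of `f`); taking the supremum
over all such presentations makes this well defined. -/
def fittingIdeal (R : Type*) [CommRing R] (M : Type*) [AddCommGroup M] [Module R M]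
    (k : ℕ) : Ideal R :=
  ⨆ (n : ℕ) (f : (Fin n → R) →ₗ[R] M) (_ : Function.Surjective f),
    Ideal.span { r : R | ∃ (ρ : Fin (n - k) → Fin n) (c : Fin (n - k) → Fin n → R),
      (∀ j, f (c j) = 0) ∧ r = Matrix.det (Matrix.of fun i j => c j (ρ i)) }

universe u

/-!
The module `Ω¹_{R₂/A}` is generated by `dT` and `db` (since `Ω¹_{B/A}` is generated by `db`),
subject to `b dT + T db = d(bT) = d(a) = 0`; the `1 × 1` minors of this relation give
`(b, T) ≤ Fitt₁`. Conversely, `∂/∂b` and `∂/∂T` taken modulo `I = (b, T)` are well defined on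
`R₂` and give a surjection `Ω¹_{R₂/A} → (R₂/I)²`. Composed with a presentation
`Rⁿ → Ω¹_{R₂/A}`, it is a matrix `F` over `R₂/I` that has a right inverse `G` and kills every
relation column `C`. Hence each `(n-1)`-minor `C_ρ` vanishes mod `I`: `det C_ρ` is the
determinant of `[[C_ρ, G_ρ], [0, 1]] = [1_ρ; F] · [C | G]`, a product through only
`n < (n - 1) + 2` indices.
-/


namespace Matrix

variable {S : Type*} [CommRing S]

theorem det_mul_eq_zero_of_card_lt {m ι : Type*} [Fintype m] [DecidableEq m] [Fintype ι]
    (h : Fintype.card ι < Fintype.card m) (M : Matrix m ι S) (N : Matrix ι m S) :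
    (M * N).det = 0 := by
  obtain ⟨e⟩ : Nonempty (ι ⊕ Fin (Fintype.card m - Fintype.card ι) ≃ m) :=
    Fintype.card_eq.mp (by simp only [Fintype.card_sum, Fintype.card_fin]; omega)
  have hMN : M * N = (fromCols M 0).submatrix id e.symm * (fromRows N 0).submatrix e.symm id := by
    rw [submatrix_mul_equiv, submatrix_id_id, fromCols_mul_fromRows, Matrix.zero_mul, add_zero]
  rw [hMN, det_mul, det_eq_zero_of_column_eq_zero (e (Sum.inr ⟨0, by omega⟩)) (fun i => by simp),
    zero_mul]

theorem det_submatrix_eq_zero_of_mul_eq_zero {ι κ μ : Type*} [Fintype ι] [DecidableEq ι]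
    [Fintype κ] [DecidableEq κ] [Fintype μ] [DecidableEq μ]
    {F : Matrix κ ι S} {G : Matrix ι κ S} {C : Matrix ι μ S} (hFG : F * G = 1) (hFC : F * C = 0)
    (hcard : Fintype.card ι < Fintype.card μ + Fintype.card κ) (ρ : μ → ι) :
    (C.submatrix ρ id).det = 0 := by
  have hfactor : fromBlocks (C.submatrix ρ id) (G.submatrix ρ id) 0 1 =
      fromRows ((1 : Matrix ι ι S).submatrix ρ id) F * fromCols C G := by
    rw [fromRows_mul_fromCols, hFC, hFG]
    congr <;> ext <;> simp [mul_apply, one_apply]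
  have := det_mul_eq_zero_of_card_lt (by simpa using hcard)
    (fromRows ((1 : Matrix ι ι S).submatrix ρ id) F) (fromCols C G)
  rwa [← hfactor, det_fromBlocks_zero₂₁, det_one, mul_one] at this

end Matrix

section FittingIdeal

open Matrix

variable {R M : Type*} [CommRing R] [AddCommGroup M] [Module R M]

theorem det_mem_fittingIdeal {n k : ℕ} {f : (Fin n → R) →ₗ[R] M} (hf : Function.Surjective f)
    (c : Fin (n - k) → Fin n → R) (hc : ∀ j, f (c j) = 0) (ρ : Fin (n - k) → Fin n) :
    Matrix.det (Matrix.of fun i j => c j (ρ i)) ∈ fittingIdeal R M k :=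
  (le_iSup_of_le n (le_iSup_of_le f (le_iSup_of_le hf le_rfl)) : _ ≤ fittingIdeal R M k)
    (Ideal.subset_span ⟨ρ, c, hc, rfl⟩)

theorem span_pair_le_fittingIdeal_one {f : (Fin 2 → R) →ₗ[R] M} (hf : Function.Surjective f)
    {x y : R} (hxy : f ![x, y] = 0) : Ideal.span {x, y} ≤ fittingIdeal R M 1 := by
  have hmem (i : Fin 2) : ![x, y] i ∈ fittingIdeal R M 1 := by
    simpa using det_mem_fittingIdeal (k := 1) hf (fun _ => ![x, y]) (fun _ => hxy) (fun _ => i)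
  rw [Ideal.span_le, Set.insert_subset_iff, Set.singleton_subset_iff]
  exact ⟨hmem 0, hmem 1⟩

theorem LinearMap.apply_eq_mulVec_algebraMap {ι κ T : Type*} [Fintype ι] [DecidableEq ι]
    [CommRing T] [Algebra R T] (g : (ι → R) →ₗ[R] κ → T) (v : ι → R) :
    g v = (Matrix.of fun i j => g (Pi.single j 1) i) *ᵥ (algebraMap R T ∘ v) := by
  conv_lhs => rw [← Finset.univ_sum_single v]
  ext i
  simp only [map_sum, Finset.sum_apply, mulVec, dotProduct, of_apply, Function.comp_apply]
  refine Finset.sum_congr rfl fun j _ => ?_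
  have hsingle : Pi.single j (v j) = v j • Pi.single j 1 := by
    rw [← Pi.single_smul', smul_eq_mul, mul_one]
  rw [hsingle, map_smul, Pi.smul_apply, Algebra.smul_def, mul_comm]

theorem fittingIdeal_le_of_surjective {κ : Type*} [Fintype κ] [DecidableEq κ] {I : Ideal R}
    {k : ℕ} {π : M →ₗ[R] κ → R ⧸ I} (hπ : Function.Surjective π) (hk : k < Fintype.card κ) :
    fittingIdeal R M k ≤ I := by
  refine iSup_le fun n => iSup_le fun f => iSup_le fun hf => ?_
  rw [Ideal.span_le]
  rintro _ ⟨ρ, c, hc, rfl⟩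
  set g := π ∘ₗ f
  set F : Matrix κ (Fin n) (R ⧸ I) := Matrix.of fun i j => g (Pi.single j 1) i
  have hg : Function.Surjective g := hπ.comp hf
  choose v hv using fun w => hg (Pi.single w 1)
  have hFG : F * Matrix.of (fun j w => Ideal.Quotient.mk I (v w j)) = 1 := by
    ext i w
    have := congrFun (LinearMap.apply_eq_mulVec_algebraMap g (v w)) i
    rw [hv w] at this
    simpa [F, mul_apply, mulVec, dotProduct, one_apply, Pi.single_apply, eq_comm] using this.symm
  have hFC : F * Matrix.of (fun j t => Ideal.Quotient.mk I (c t j)) = 0 := by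
    ext i t
    have := congrFun (LinearMap.apply_eq_mulVec_algebraMap g (c t)) i
    simp only [g, LinearMap.comp_apply, hc, map_zero] at this
    simpa [F, g, mul_apply, mulVec, dotProduct] using this.symm
  rw [SetLike.mem_coe, ← Ideal.Quotient.eq_zero_iff_mem, RingHom.map_det]
  refine Matrix.det_submatrix_eq_zero_of_mul_eq_zero hFG hFC ?_ ρ
  rw [Fintype.card_fin, Fintype.card_fin]
  omega

end FittingIdeal

namespace Derivation

variable {A P N : Type*} [CommRing A] [CommRing P] [Algebra A P] [AddCommGroup N] [Module A N]
  [Module P N]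

def compAlgHom {Q : Type*} [CommRing Q] [Algebra A Q] [Module Q N] (d : Derivation A Q N)
    (φ : P →ₐ[A] Q) (hφ : ∀ (p : P) (n : N), p • n = φ p • n) : Derivation A P N :=
  Derivation.mk' (d.toLinearMap ∘ₗ φ.toLinearMap) fun x y => by simp [hφ]

theorem map_eq_zero_of_mem_span {s : Set P} [Module (P ⧸ Ideal.span s) N]
    [IsScalarTower P (P ⧸ Ideal.span s) N] (d : Derivation A P N) (hs : ∀ x ∈ s, d x = 0)
    {x : P} (hx : x ∈ Ideal.span s) : d x = 0 := by
  induction hx using Submodule.span_induction with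
  | mem x hx => exact hs x hx
  | zero => exact d.map_zero
  | add x y _ _ hx hy => rw [d.map_add, hx, hy, add_zero]
  | smul p x hx' hx =>
    rw [smul_eq_mul, leibniz, hx, smul_zero, zero_add, ← algebraMap_smul (P ⧸ Ideal.span s),
      Ideal.Quotient.algebraMap_eq, Ideal.Quotient.eq_zero_iff_mem.mpr hx', zero_smul]

variable {J : Ideal P} [Module (P ⧸ J) N] [IsScalarTower P (P ⧸ J) N]

noncomputable def liftQuotient (d : Derivation A P N) (hd : ∀ x ∈ J, d x = 0) :
    Derivation A (P ⧸ J) N :=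
  Derivation.mk'
    ((J.restrictScalars A).liftQ d.toLinearMap hd ∘ₗ
      (Submodule.Quotient.restrictScalarsEquiv A J).symm.toLinearMap)
    fun x y => by
      obtain ⟨p, rfl⟩ := Ideal.Quotient.mk_surjective x
      obtain ⟨q, rfl⟩ := Ideal.Quotient.mk_surjective y
      change d (p * q) = _ • d q + _ • d p
      rw [leibniz, ← Ideal.Quotient.algebraMap_eq, algebraMap_smul, algebraMap_smul]

@[simp]
theorem liftQuotient_mk (d : Derivation A P N) (hd : ∀ x ∈ J, d x = 0) (x : P) :
    d.liftQuotient hd (Ideal.Quotient.mk J x) = d x :=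
  rfl

end Derivation

section KaehlerChart

open KaehlerDifferential

variable {A B : Type*} [CommRing A] [CommRing B] [Algebra A B] (b : B) (a : A)

local notation "R₂" => B[X] ⧸ Ideal.span {C b * X - C (algebraMap A B a)}
local notation "b₂" => Ideal.Quotient.mk (Ideal.span {C b * X - C (algebraMap A B a)}) (C b)
local notation "T₂" => Ideal.Quotient.mk (Ideal.span {C b * X - C (algebraMap A B a)}) X
local notation "I₂" => (Ideal.span {b₂, T₂} : Ideal R₂)

theorem algebraMap_residue_eq_zero_of_mem {p : B[X]}
    (hp : Ideal.Quotient.mk (Ideal.span {C b * X - C (algebraMap A B a)}) p ∈ I₂) :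
    algebraMap B[X] (R₂ ⧸ I₂) p = 0 := by
  rwa [← Ideal.Quotient.mk_algebraMap, Ideal.Quotient.algebraMap_eq,
    Ideal.Quotient.eq_zero_iff_mem]

theorem algebraMap_residue_eq_comp_eval :
    algebraMap B[X] (R₂ ⧸ I₂) = (algebraMap B (R₂ ⧸ I₂)).comp (evalRingHom 0) := by
  refine Polynomial.ringHom_ext (fun β => ?_) ?_
  · rw [RingHom.comp_apply, coe_evalRingHom, eval_C,
      IsScalarTower.algebraMap_apply B B[X] (R₂ ⧸ I₂), Polynomial.algebraMap_eq]
  · rw [RingHom.comp_apply, coe_evalRingHom, eval_X, map_zero]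
    exact algebraMap_residue_eq_zero_of_mem b a (Ideal.subset_span (Set.mem_insert_of_mem _ rfl))

theorem smul_residue_eq_eval_zero_smul (p : B[X]) (s : R₂ ⧸ I₂) : p • s = p.eval 0 • s := by
  refine (Algebra.smul_def p s).trans ?_
  rw [algebraMap_residue_eq_comp_eval]
  exact (Algebra.smul_def (p.eval 0) s).symm

variable (bas : Module.Basis (Fin 1) B Ω[B⁄A])

noncomputable def polyResidueDerivB : Derivation A B[X] (R₂ ⧸ I₂) :=
  ((Algebra.linearMap B (R₂ ⧸ I₂) ∘ₗ bas.coord 0).compDer (D A B)).compAlgHom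
    ((aeval (0 : B)).restrictScalars A) (smul_residue_eq_eval_zero_smul b a)

noncomputable def polyResidueDerivT : Derivation A B[X] (R₂ ⧸ I₂) :=
  (mkDerivation B (1 : R₂ ⧸ I₂)).restrictScalars A

theorem polyResidueDerivB_apply (p : B[X]) :
    polyResidueDerivB b a bas p = algebraMap B (R₂ ⧸ I₂) (bas.coord 0 (D A B (p.eval 0))) :=
  rfl

theorem polyResidueDerivT_apply (p : B[X]) :
    polyResidueDerivT b a p = algebraMap B[X] (R₂ ⧸ I₂) (derivative p) :=
  (mkDerivation_apply B 1 p).trans (Algebra.algebraMap_eq_smul_one _).symm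

theorem polyResidueDerivB_generator :
    polyResidueDerivB b a bas (C b * X - C (algebraMap A B a)) = 0 := by
  simp [polyResidueDerivB_apply]

theorem polyResidueDerivT_generator :
    polyResidueDerivT b a (C b * X - C (algebraMap A B a)) = 0 := by
  rw [polyResidueDerivT_apply, derivative_sub, derivative_C_mul_X, derivative_C, sub_zero]
  exact algebraMap_residue_eq_zero_of_mem b a (Ideal.subset_span (Set.mem_insert _ _))

noncomputable def kaehlerToResidue : Ω[R₂⁄A] →ₗ[R₂] Fin 2 → R₂ ⧸ I₂ :=
  LinearMap.pi ![
    ((polyResidueDerivB b a bas).liftQuotient fun _ hx =>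
      Derivation.map_eq_zero_of_mem_span _ (by simpa using polyResidueDerivB_generator b a bas) hx
        ).liftKaehlerDifferential,
    ((polyResidueDerivT b a).liftQuotient fun _ hx =>
      Derivation.map_eq_zero_of_mem_span _ (by simpa using polyResidueDerivT_generator b a) hx
        ).liftKaehlerDifferential]

theorem kaehlerToResidue_D_mk (p : B[X]) :
    kaehlerToResidue b a bas (D A R₂ (Ideal.Quotient.mk _ p)) =
      ![polyResidueDerivB b a bas p, polyResidueDerivT b a p] := by
  ext i
  fin_cases i <;> simp [kaehlerToResidue]

theorem kaehlerToResidue_D_b (hbas : bas 0 = D A B b) :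
    kaehlerToResidue b a bas (D A R₂ b₂) = ![1, 0] := by
  rw [kaehlerToResidue_D_mk, polyResidueDerivB_apply, polyResidueDerivT_apply, eval_C, ← hbas,
    Module.Basis.coord_apply, Module.Basis.repr_self, Finsupp.single_eq_same, map_one,
    derivative_C, map_zero]

theorem kaehlerToResidue_D_T : kaehlerToResidue b a bas (D A R₂ T₂) = ![0, 1] := by
  rw [kaehlerToResidue_D_mk, polyResidueDerivB_apply, polyResidueDerivT_apply, eval_X,
    Derivation.map_zero, map_zero, map_zero, derivative_X, map_one]

theorem kaehlerToResidue_surjective (hbas : bas 0 = D A B b) :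
    Function.Surjective (kaehlerToResidue b a bas) := by
  intro v
  obtain ⟨r₀, hr₀⟩ := Ideal.Quotient.mk_surjective (v 0)
  obtain ⟨r₁, hr₁⟩ := Ideal.Quotient.mk_surjective (v 1)
  refine ⟨r₀ • D A R₂ b₂ + r₁ • D A R₂ T₂, ?_⟩
  ext i
  fin_cases i <;> simp [kaehlerToResidue_D_b b a bas hbas, kaehlerToResidue_D_T,
    ← Algebra.algebraMap_eq_smul_one, hr₀, hr₁]

theorem D_mk_C (hbas : bas 0 = D A B b) (β : B) :
    D A R₂ (Ideal.Quotient.mk _ (C β)) = bas.coord 0 (D A B β) • D A R₂ b₂ := by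
  have hβ : D A B β = bas.coord 0 (D A B β) • D A B b := by
    simpa [hbas] using (bas.sum_repr (D A B β)).symm
  have := congrArg (map A A B R₂) hβ
  rwa [map_D, map_smul, map_D, ← Ideal.Quotient.mk_algebraMap, Polynomial.algebraMap_eq,
    ← Ideal.Quotient.mk_algebraMap, Polynomial.algebraMap_eq] at this

theorem span_D_T_D_b_eq_top (hbas : bas 0 = D A B b) :
    Submodule.span R₂ {D A R₂ T₂, D A R₂ b₂} = ⊤ := by
  rw [eq_top_iff, ← span_range_derivation, Submodule.span_le]
  rintro _ ⟨r, rfl⟩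
  obtain ⟨p, rfl⟩ := Ideal.Quotient.mk_surjective r
  have hT : D A R₂ T₂ ∈ Submodule.span R₂ {D A R₂ T₂, D A R₂ b₂} :=
    Submodule.subset_span (Set.mem_insert _ _)
  have hb : D A R₂ b₂ ∈ Submodule.span R₂ {D A R₂ T₂, D A R₂ b₂} :=
    Submodule.subset_span (Set.mem_insert_of_mem _ rfl)
  induction p using Polynomial.induction_on' with
  | add p q hp hq => rw [map_add, map_add]; exact add_mem hp hq
  | monomial n β =>
    rw [← C_mul_X_pow_eq_monomial, map_mul, map_pow, Derivation.leibniz, Derivation.leibniz_pow,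
      D_mk_C b a bas hbas β]
    refine add_mem ?_ ?_
    · exact Submodule.smul_mem _ _ (nsmul_mem (Submodule.smul_mem _ _ hT) n)
    · exact Submodule.smul_mem _ _ (Submodule.smul_of_tower_mem _ _ hb)

theorem linearCombination_D_surjective (hbas : bas 0 = D A B b) :
    Function.Surjective (Fintype.linearCombination R₂ ![D A R₂ T₂, D A R₂ b₂]) := by
  rw [← span_range_eq_top_iff_surjective_fintypeLinearCombination, Matrix.range_cons_cons_empty]
  exact span_D_T_D_b_eq_top b a bas hbas

theorem linearCombination_b_T_eq_zero :
    Fintype.linearCombination R₂ ![D A R₂ T₂, D A R₂ b₂] ![b₂, T₂] = 0 := by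
  have hbT : b₂ * T₂ = algebraMap A R₂ a := by
    rw [← map_mul, ← Ideal.Quotient.mk_algebraMap, Polynomial.algebraMap_apply,
      Ideal.Quotient.mk_eq_mk_iff_sub_mem]
    exact Ideal.mem_span_singleton_self _
  rw [Fintype.linearCombination_apply, Fin.sum_univ_two]
  simp only [Matrix.cons_val_zero, Matrix.cons_val_one]
  rw [← Derivation.leibniz, hbT, Derivation.map_algebraMap]

end KaehlerChart

theorem fittingIdeal_one_kaehler_general
    (A B : Type u) [CommRing A] [CommRing B] [Algebra A B]
    (b : B) (a : A)
    (bas : Module.Basis (Fin 1) B (Ω[B⁄A])) (hbas : bas 0 = KaehlerDifferential.D A B b) :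
    fittingIdeal (Polynomial B ⧸ Ideal.span {C b * X - C (algebraMap A B a)})
        (Ω[(Polynomial B ⧸ Ideal.span {C b * X - C (algebraMap A B a)})⁄A]) 1 =
      Ideal.span
        {Ideal.Quotient.mk (Ideal.span {C b * X - C (algebraMap A B a)}) (C b),
         Ideal.Quotient.mk (Ideal.span {C b * X - C (algebraMap A B a)}) X} :=
  le_antisymm
    (fittingIdeal_le_of_surjective (kaehlerToResidue_surjective b a bas hbas) (by simp))
    (span_pair_le_fittingIdeal_one (linearCombination_D_surjective b a bas hbas)
      (linearCombination_b_T_eq_zero b a))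

/-- Let `A` be a commutative ring, `B` a smooth `A`-algebra with
`Ω¹_{B/A}` free of rank one on the basis `db` (`b ∈ B` a regular element), `a ∈ A`,
and `R₂ = B[T]/(bT - a)`. Then the first Fitting ideal of the `R₂`-module
`Ω¹_{R₂/A}` is the ideal generated by the images of `b` and `T`. -/
theorem fittingIdeal_one_kaehler
    (A B : Type u) [CommRing A] [CommRing B] [Algebra A B] [Algebra.Smooth A B]
    (b : B) (hb : b ∈ nonZeroDivisors B) (a : A)
    (bas : Module.Basis (Fin 1) B (Ω[B⁄A])) (hbas : bas 0 = KaehlerDifferential.D A B b) :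
    fittingIdeal (Polynomial B ⧸ Ideal.span {C b * X - C (algebraMap A B a)})
        (Ω[(Polynomial B ⧸ Ideal.span {C b * X - C (algebraMap A B a)})⁄A]) 1 =
      Ideal.span
        {Ideal.Quotient.mk (Ideal.span {C b * X - C (algebraMap A B a)}) (C b),
         Ideal.Quotient.mk (Ideal.span {C b * X - C (algebraMap A B a)}) X} :=
  fittingIdeal_one_kaehler_general A B b a bas hbas
end

section
/- Let m > n ≥ 1, ζ = exp(2πi/m), and for A,B ⊆ {0,...,m−1} with |A|=|B|=n let Δ_{A,B} = det(ζ^{ab})_{a∈A, b∈B}. Let Q_0 be the set of A with |A|=n and 0 ∈ A, and for A ∈ Q_0 set γ(A) = m − 1 − max(A), where max(A) denotes the largest element of A. Then for every B ⊆ {0,...,m−1} with |B| = n: ∑_{A ∈ Q_0} γ(A) |Δ_{A,B}|² = (m−n) m^{n−1}. -/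
open scoped BigOperators

/-- `ζ_m = exp(2πi/m)`. -/
noncomputable def zetaC (m : ℕ) : ℂ := Complex.exp (2 * Real.pi * Complex.I / m)

/-- The `n × n` minor of the matrix `(ζ^{ab})_{0 ≤ a,b ≤ m-1}` with rows the
`n`-element subset `A` and columns the `n`-element subset `B` (both taken in
increasing order). -/
noncomputable def DeltaMinor (m n : ℕ) (A B : Finset (Fin m))
    (hA : A.card = n) (hB : B.card = n) : ℂ :=
  Matrix.det (Matrix.of fun i j : Fin n =>
    zetaC m ^ (((A.orderIsoOfFin hA i : Fin m) : ℕ) * ((B.orderIsoOfFin hB j : Fin m) : ℕ)))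

/-- The normalized minor `Δ*_{A,B} = m^{-n/2} Δ_{A,B}` of the unitary matrix
`M* = m^{-1/2} (ζ^{ab})`. -/
noncomputable def DeltaMinorStar (m n : ℕ) (A B : Finset (Fin m))
    (hA : A.card = n) (hB : B.card = n) : ℂ :=
  (((Real.sqrt m : ℂ))⁻¹) ^ n * DeltaMinor m n A B hA hB



section ZagierAux
variable {m n : ℕ}

lemma zeta_prim (hm : m ≠ 0) : IsPrimitiveRoot (zetaC m) m :=
  Complex.isPrimitiveRoot_exp m hm

lemma zeta_pow_m (hm : m ≠ 0) : zetaC m ^ m = 1 := (zeta_prim hm).pow_eq_one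

lemma zeta_pow_mod (hm : m ≠ 0) (k : ℕ) : zetaC m ^ k = zetaC m ^ (k % m) :=
  pow_eq_pow_mod k (zeta_pow_m hm)

lemma abs_zeta (hm : m ≠ 0) : ‖zetaC m‖ = 1 := by
  have : (2 * Real.pi * Complex.I / m) = ((2 * Real.pi / m : ℝ) : ℂ) * Complex.I := by
    push_cast; ring
  rw [zetaC, this, Complex.norm_exp_ofReal_mul_I]

lemma conj_zeta_pow (hm : m ≠ 0) (k : ℕ) :
    (starRingEnd ℂ) (zetaC m ^ k) = (zetaC m ^ k)⁻¹ := by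
  have h1 : ‖zetaC m ^ k‖ = 1 := by
    rw [norm_pow, abs_zeta hm, one_pow]
  have h2 := Complex.mul_conj (zetaC m ^ k)
  rw [Complex.normSq_eq_norm_sq, h1] at h2
  exact eq_inv_of_mul_eq_one_right (by rw [h2]; norm_num)

lemma orth (hm : m ≠ 0) (b c : Fin m) :
    ∑ a : Fin m, zetaC m ^ ((a : ℕ) * (b : ℕ)) *
      (starRingEnd ℂ) (zetaC m ^ ((a : ℕ) * (c : ℕ))) =
    if b = c then (m : ℂ) else 0 := by
  have hζ : zetaC m ≠ 0 := (zeta_prim hm).ne_zero hm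
  set x : ℂ := zetaC m ^ (b : ℕ) * (zetaC m ^ (c : ℕ))⁻¹ with hx
  have hterm : ∀ a : Fin m, zetaC m ^ ((a : ℕ) * (b : ℕ)) *
      (starRingEnd ℂ) (zetaC m ^ ((a : ℕ) * (c : ℕ))) = x ^ (a : ℕ) := by
    intro a
    have hxa : x ^ (a : ℕ) = zetaC m ^ ((b:ℕ)*(a:ℕ)) * (zetaC m ^ ((c:ℕ)*(a:ℕ)))⁻¹ := by
      rw [hx, mul_pow, ← pow_mul, ← inv_pow, ← pow_mul, inv_pow]
    rw [conj_zeta_pow hm, hxa, Nat.mul_comm (a:ℕ) (b:ℕ), Nat.mul_comm (a:ℕ) (c:ℕ)]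
  simp only [hterm]
  rw [Fin.sum_univ_eq_sum_range (fun i => x ^ i)]
  by_cases hbc : b = c
  · subst hbc
    simp [hx, mul_inv_cancel₀ (pow_ne_zero _ hζ)]
  · rw [if_neg hbc]
    have hx1 : x ≠ 1 := by
      intro h
      rw [hx, mul_inv_eq_one₀ (pow_ne_zero _ hζ)] at h
      exact hbc (Fin.ext ((zeta_prim hm).pow_inj b.isLt c.isLt h))
    have hxm : x ^ m = 1 := by
      rw [hx, mul_pow, inv_pow, ← pow_mul, ← pow_mul, Nat.mul_comm (b:ℕ) m,
        Nat.mul_comm (c:ℕ) m, pow_mul, pow_mul, zeta_pow_m hm, one_pow, one_pow]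
      simp
    rw [geom_sum_eq hx1, hxm]
    simp


noncomputable def Dmat (m n : ℕ) (a b : Fin n → Fin m) : ℂ :=
  Matrix.det (Matrix.of fun i j : Fin n => zetaC m ^ ((a i : ℕ) * ((b j : ℕ))))

open Equiv Finset in
lemma sum_all (hm : m ≠ 0) (b : Fin n → Fin m) (hb : Function.Injective b) :
    ∑ f : Fin n → Fin m, Dmat m n f b * (starRingEnd ℂ) (Dmat m n f b) =
      (n.factorial : ℂ) * (m : ℂ) ^ n := by
  classical
  have inner : ∀ σ τ : Perm (Fin n),
      ∑ f : Fin n → Fin m, ∏ i, (zetaC m ^ ((f (σ i) : ℕ) * (b i : ℕ)) *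
        (starRingEnd ℂ) (zetaC m ^ ((f (τ i) : ℕ) * (b i : ℕ)))) =
      if σ = τ then (m : ℂ) ^ n else 0 := by
    intro σ τ
    set e : Perm (Fin n) := σ.trans τ.symm with he
    have hτe : ∀ i, τ (e i) = σ i := fun i => τ.apply_symm_apply (σ i)
    have step1 : ∀ f : Fin n → Fin m,
        ∏ i, (zetaC m ^ ((f (σ i) : ℕ) * (b i : ℕ)) *
          (starRingEnd ℂ) (zetaC m ^ ((f (τ i) : ℕ) * (b i : ℕ)))) =
        ∏ i, (zetaC m ^ ((f (σ i) : ℕ) * (b i : ℕ)) *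
          (starRingEnd ℂ) (zetaC m ^ ((f (σ i) : ℕ) * (b (e i) : ℕ)))) := by
      intro f
      rw [Finset.prod_mul_distrib, Finset.prod_mul_distrib]
      congr 1
      rw [← Equiv.prod_comp e fun i =>
        (starRingEnd ℂ) (zetaC m ^ ((f (τ i) : ℕ) * (b i : ℕ)))]
      exact Finset.prod_congr rfl fun i _ => by rw [hτe]
    simp only [step1]
    have step2 : ∑ f : Fin n → Fin m, ∏ i,
          (zetaC m ^ ((f (σ i) : ℕ) * (b i : ℕ)) *
            (starRingEnd ℂ) (zetaC m ^ ((f (σ i) : ℕ) * (b (e i) : ℕ)))) =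
        ∑ g : Fin n → Fin m, ∏ i,
          (zetaC m ^ ((g i : ℕ) * (b i : ℕ)) *
            (starRingEnd ℂ) (zetaC m ^ ((g i : ℕ) * (b (e i) : ℕ)))) := by
      exact Fintype.sum_bijective (fun f => f ∘ σ)
        ((Equiv.arrowCongr σ.symm (Equiv.refl (Fin m))).bijective)
        _ _ (fun f => rfl)
    rw [step2]
    have step3 : ∑ g : Fin n → Fin m, ∏ i,
          (zetaC m ^ ((g i : ℕ) * (b i : ℕ)) *
            (starRingEnd ℂ) (zetaC m ^ ((g i : ℕ) * (b (e i) : ℕ)))) =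
        ∏ i, ∑ a : Fin m, (zetaC m ^ ((a : ℕ) * (b i : ℕ)) *
            (starRingEnd ℂ) (zetaC m ^ ((a : ℕ) * (b (e i) : ℕ)))) := by
      rw [Finset.prod_univ_sum, Fintype.piFinset_univ]
    rw [step3]
    have step4 : ∀ i, (∑ a : Fin m, (zetaC m ^ ((a : ℕ) * (b i : ℕ)) *
        (starRingEnd ℂ) (zetaC m ^ ((a : ℕ) * (b (e i) : ℕ))))) =
        if e i = i then (m : ℂ) else 0 := by
      intro i
      rw [orth hm (b i) (b (e i))]
      by_cases h : e i = i
      · rw [if_pos h, if_pos (by rw [h])]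
      · rw [if_neg h, if_neg (fun hc => h (hb hc.symm))]
    simp only [step4]
    by_cases hστ : σ = τ
    · have : ∀ i, e i = i := fun i => by simp [he, hστ]
      simp [this, hστ]
    · have : ∃ i, e i ≠ i := by
        by_contra hco
        push_neg at hco
        apply hστ
        ext i
        have h1 := hco i
        rw [he] at h1
        have h2 : σ i = τ i := by simpa using congrArg τ h1
        exact congrArg Fin.val h2
      obtain ⟨i, hi⟩ := this
      rw [if_neg hστ]
      exact Finset.prod_eq_zero (Finset.mem_univ i) (if_neg hi)
  have hD : ∀ f : Fin n → Fin m, Dmat m n f b =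
      ∑ σ : Perm (Fin n), ((Perm.sign σ : ℤ) : ℂ) *
        ∏ i, zetaC m ^ ((f (σ i) : ℕ) * (b i : ℕ)) := by
    intro f; rw [Dmat, Matrix.det_apply']; rfl
  have hC : ∀ f : Fin n → Fin m, (starRingEnd ℂ) (Dmat m n f b) =
      ∑ τ : Perm (Fin n), ((Perm.sign τ : ℤ) : ℂ) *
        ∏ i, (starRingEnd ℂ) (zetaC m ^ ((f (τ i) : ℕ) * (b i : ℕ))) := by
    intro f
    rw [hD, map_sum]
    exact Finset.sum_congr rfl fun τ _ => by rw [map_mul, map_prod, map_intCast]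
  calc ∑ f : Fin n → Fin m, Dmat m n f b * (starRingEnd ℂ) (Dmat m n f b)
      = ∑ f : Fin n → Fin m, ∑ σ : Perm (Fin n), ∑ τ : Perm (Fin n),
          ((Perm.sign σ : ℤ) : ℂ) * ((Perm.sign τ : ℤ) : ℂ) *
          ∏ i, (zetaC m ^ ((f (σ i) : ℕ) * (b i : ℕ)) *
            (starRingEnd ℂ) (zetaC m ^ ((f (τ i) : ℕ) * (b i : ℕ)))) := by
        refine Finset.sum_congr rfl fun f _ => ?_
        rw [hC, hD, Finset.sum_mul_sum]
        refine Finset.sum_congr rfl fun σ _ => Finset.sum_congr rfl fun τ _ => ?_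
        rw [Finset.prod_mul_distrib]
        ring
    _ = ∑ σ : Perm (Fin n), ∑ τ : Perm (Fin n),
          ((Perm.sign σ : ℤ) : ℂ) * ((Perm.sign τ : ℤ) : ℂ) *
          ∑ f : Fin n → Fin m,
          ∏ i, (zetaC m ^ ((f (σ i) : ℕ) * (b i : ℕ)) *
            (starRingEnd ℂ) (zetaC m ^ ((f (τ i) : ℕ) * (b i : ℕ)))) := by
        rw [Finset.sum_comm]
        refine Finset.sum_congr rfl fun σ _ => ?_
        rw [Finset.sum_comm]
        exact Finset.sum_congr rfl fun τ _ => (Finset.mul_sum _ _ _).symm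
    _ = ∑ σ : Perm (Fin n), ∑ τ : Perm (Fin n),
          ((Perm.sign σ : ℤ) : ℂ) * ((Perm.sign τ : ℤ) : ℂ) *
          (if σ = τ then (m : ℂ) ^ n else 0) := by
        exact Finset.sum_congr rfl fun σ _ => Finset.sum_congr rfl fun τ _ => by
          rw [inner]
    _ = ∑ σ : Perm (Fin n), (m : ℂ) ^ n := by
        refine Finset.sum_congr rfl fun σ _ => ?_
        rw [Finset.sum_eq_single_of_mem σ (Finset.mem_univ σ)
          (fun τ _ hτ => by rw [if_neg (fun h => hτ h.symm), mul_zero])]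
        rw [if_pos rfl, ← Int.cast_mul, ← Units.val_mul, Int.units_mul_self]
        norm_num
    _ = (n.factorial : ℂ) * (m : ℂ) ^ n := by
        rw [Finset.sum_const, Finset.card_univ, Fintype.card_perm, Fintype.card_fin,
          nsmul_eq_mul]

/-- squared modulus of the minor with given row enumeration. -/
noncomputable def Nsq (m n : ℕ) (b f : Fin n → Fin m) : ℝ :=
  Complex.normSq (Dmat m n f b)

lemma Dmat_comp_perm (a b : Fin n → Fin m) (σ : Equiv.Perm (Fin n)) :
    Dmat m n (a ∘ σ) b = ((Equiv.Perm.sign σ : ℤ) : ℂ) * Dmat m n a b := by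
  unfold Dmat
  exact Matrix.det_permute σ (Matrix.of fun i j : Fin n => zetaC m ^ ((a i : ℕ) * (b j : ℕ)))

lemma Nsq_comp_perm (a b : Fin n → Fin m) (σ : Equiv.Perm (Fin n)) :
    Nsq m n b (a ∘ σ) = Nsq m n b a := by
  rw [Nsq, Nsq, Dmat_comp_perm, map_mul]
  rcases Int.units_eq_one_or (Equiv.Perm.sign σ) with h | h <;> simp [h]

lemma Dmat_eq_zero (a b : Fin n → Fin m) (h : ¬ Function.Injective a) :
    Dmat m n a b = 0 := by
  rw [Function.not_injective_iff] at h
  obtain ⟨i, j, hij, hne⟩ := h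
  exact Matrix.det_zero_of_row_eq hne (funext fun k => by
    show zetaC m ^ ((a i : ℕ) * _) = zetaC m ^ ((a j : ℕ) * _)
    rw [hij])

/-- Given an injective `f` into `S` with `|S| = n`, the permutation aligning `f`
with the order isomorphism of `S`. -/
noncomputable def permOf {S : Finset (Fin m)} (hS : S.card = n) (f : Fin n → Fin m)
    (hf : Function.Injective f) (him : ∀ i, f i ∈ S) : Equiv.Perm (Fin n) :=
  Equiv.ofBijective (fun i => (S.orderIsoOfFin hS).symm ⟨f i, him i⟩)
    (Finite.injective_iff_bijective.mp (fun i j h => by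
      have := congrArg (fun x => ((S.orderIsoOfFin hS x : Fin m))) h
      simp only [OrderIso.apply_symm_apply] at this
      exact hf this))

lemma permOf_spec {S : Finset (Fin m)} (hS : S.card = n) (f : Fin n → Fin m)
    (hf : Function.Injective f) (him : ∀ i, f i ∈ S) (i : Fin n) :
    ((S.orderIsoOfFin hS (permOf hS f hf him i) : Fin m)) = f i := by
  show ((S.orderIsoOfFin hS ((S.orderIsoOfFin hS).symm ⟨f i, him i⟩) : Fin m)) = f i
  rw [OrderIso.apply_symm_apply]

lemma Nsq_oIso {S : Finset (Fin m)} (hS : S.card = n) (b f : Fin n → Fin m)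
    (hf : Function.Injective f) (him : ∀ i, f i ∈ S) :
    Nsq m n b f = Nsq m n b (fun i => (S.orderIsoOfFin hS i : Fin m)) := by
  have : f = (fun i => (S.orderIsoOfFin hS i : Fin m)) ∘ (permOf hS f hf him) :=
    funext fun i => (permOf_spec hS f hf him i).symm
  rw [this, Nsq_comp_perm]

lemma oIso_injective {S : Finset (Fin m)} (hS : S.card = n) :
    Function.Injective (fun i => (S.orderIsoOfFin hS i : Fin m)) :=
  fun i j h => (S.orderIsoOfFin hS).injective (Subtype.ext h)

lemma oIso_image {S : Finset (Fin m)} (hS : S.card = n) :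
    Finset.univ.image (fun i => (S.orderIsoOfFin hS i : Fin m)) = S := by
  apply Finset.eq_of_subset_of_card_le
  · intro x hx
    obtain ⟨i, _, rfl⟩ := Finset.mem_image.mp hx
    exact (S.orderIsoOfFin hS i).2
  · rw [Finset.card_image_of_injective _ (oIso_injective hS), Finset.card_univ,
      Fintype.card_fin, hS]

/-- Sum of `|Δ_{S,B}|²` over all `n`-subsets `S` equals `mⁿ`. -/
lemma sum_over_subsets (hm : m ≠ 0) (b : Fin n → Fin m) (hb : Function.Injective b) :
    ∑ S : {S : Finset (Fin m) // S.card = n},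
      Nsq m n b (fun i => ((S.1.orderIsoOfFin S.2 i : Fin m))) = (m : ℝ) ^ n := by
  classical
  -- step 1 : total sum over all functions
  have h1 : ∑ f : Fin n → Fin m, Nsq m n b f = (n.factorial : ℝ) * (m : ℝ) ^ n := by
    have := sum_all hm b hb
    apply Complex.ofReal_injective
    push_cast
    rw [← this]
    rw [Finset.sum_congr rfl (fun f _ => (Complex.mul_conj (Dmat m n f b)))]
    push_cast [Nsq]
    rfl
  -- step 2 : restrict to injective functions
  set s : Finset (Fin n → Fin m) := Finset.univ.filter (fun f => Function.Injective f)
    with hs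
  have h2 : ∑ f ∈ s, Nsq m n b f = (n.factorial : ℝ) * (m : ℝ) ^ n := by
    rw [hs, Finset.sum_filter_of_ne, h1]
    intro f _ hne
    by_contra hni
    exact hne (by rw [Nsq, Dmat_eq_zero f b hni, map_zero])
  -- the canonical representative
  set G : Finset (Fin m) → ℝ := fun S =>
    if h : S.card = n then Nsq m n b (fun i => (S.orderIsoOfFin h i : Fin m)) else 0
    with hG
  have hmem : ∀ f ∈ s, Function.Injective f := fun f hf => (Finset.mem_filter.mp hf).2
  have hcard : ∀ f ∈ s, (Finset.univ.image f).card = n := fun f hf => by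
    rw [Finset.card_image_of_injective _ (hmem f hf), Finset.card_univ, Fintype.card_fin]
  have h3 : ∀ f ∈ s, Nsq m n b f = G (Finset.univ.image f) := by
    intro f hf
    rw [hG]
    simp only [dif_pos (hcard f hf)]
    exact Nsq_oIso (hcard f hf) b f (hmem f hf)
      (fun i => Finset.mem_image_of_mem f (Finset.mem_univ i))
  rw [Finset.sum_congr rfl h3] at h2
  rw [Finset.sum_comp G (fun f => Finset.univ.image f)] at h2
  -- image of the fibration
  have h5 : s.image (fun f => Finset.univ.image f) = Finset.univ.powersetCard n := by
    apply Finset.Subset.antisymm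
    · intro T hT
      obtain ⟨f, hf, rfl⟩ := Finset.mem_image.mp hT
      exact Finset.mem_powersetCard_univ.mpr (hcard f hf)
    · intro T hT
      have hTc := Finset.mem_powersetCard_univ.mp hT
      refine Finset.mem_image.mpr ⟨fun i => (T.orderIsoOfFin hTc i : Fin m), ?_, ?_⟩
      · exact Finset.mem_filter.mpr ⟨Finset.mem_univ _, oIso_injective hTc⟩
      · exact oIso_image hTc
  rw [h5] at h2
  -- fibre cardinalities
  have h6 : ∀ T ∈ Finset.univ.powersetCard n,
      (s.filter (fun f => Finset.univ.image f = T)).card = n.factorial := by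
    intro T hT
    have hTc := Finset.mem_powersetCard_univ.mp hT
    rw [show n.factorial = Fintype.card (Equiv.Perm (Fin n)) by
      rw [Fintype.card_perm, Fintype.card_fin], ← Finset.card_univ]
    symm
    have himg : ∀ f, f ∈ Finset.filter (fun f => Finset.image f Finset.univ = T) s →
        Function.Injective f ∧ ∀ i, f i ∈ T := by
      intro f hf
      have h1 := Finset.mem_filter.mp hf
      have h2 := (Finset.mem_filter.mp h1.1).2
      exact ⟨h2, fun i => h1.2 ▸ Finset.mem_image_of_mem f (Finset.mem_univ i)⟩
    refine Finset.card_bij'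
      (fun (π : Equiv.Perm (Fin n)) (_ : π ∈ Finset.univ) =>
        (fun i => (T.orderIsoOfFin hTc i : Fin m)) ∘ π)
      (fun f hf => permOf hTc f (himg f hf).1 (himg f hf).2) ?_ ?_ ?_ ?_
    · intro π _
      refine Finset.mem_filter.mpr ⟨Finset.mem_filter.mpr ⟨Finset.mem_univ _,
        (oIso_injective hTc).comp π.injective⟩, ?_⟩
      apply Finset.Subset.antisymm
      · intro x hx
        obtain ⟨i, _, rfl⟩ := Finset.mem_image.mp hx
        exact (T.orderIsoOfFin hTc (π i)).2
      · intro x hx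
        have hx2 : x ∈ Finset.univ.image (fun i => (T.orderIsoOfFin hTc i : Fin m)) :=
          (oIso_image hTc).symm ▸ hx
        obtain ⟨i, _, rfl⟩ := Finset.mem_image.mp hx2
        exact Finset.mem_image.mpr ⟨π.symm i, Finset.mem_univ _, by simp⟩
    · intro f _
      exact Finset.mem_univ _
    · intro π _
      apply Equiv.ext
      intro i
      apply oIso_injective hTc
      show (T.orderIsoOfFin hTc (permOf hTc _ _ _ i) : Fin m) = _
      rw [permOf_spec]
      rfl
    · intro f hf
      funext i
      exact permOf_spec hTc f _ _ i
  rw [Finset.sum_congr rfl (fun T hT => by rw [h6 T hT])] at h2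
  -- finish
  have h7 : ∑ T ∈ Finset.univ.powersetCard n, n.factorial • G T
      = (n.factorial : ℝ) * ∑ T ∈ Finset.univ.powersetCard n, G T := by
    rw [Finset.mul_sum]
    exact Finset.sum_congr rfl fun T _ => by rw [nsmul_eq_mul]
  rw [h7] at h2
  have hfac : (n.factorial : ℝ) ≠ 0 := Nat.cast_ne_zero.mpr (Nat.factorial_ne_zero n)
  have h8 : ∑ T ∈ Finset.univ.powersetCard n, G T = (m : ℝ) ^ n :=
    mul_left_cancel₀ hfac h2
  rw [← h8]
  rw [Finset.sum_subtype (Finset.univ.powersetCard n)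
    (fun T => Finset.mem_powersetCard_univ (s := T)) G]
  exact Finset.sum_congr rfl fun S _ => by rw [hG]; simp only [dif_pos S.2]

lemma zeta_pow_congr (hm : m ≠ 0) {A B : ℕ} (h : A % m = B % m) :
    zetaC m ^ A = zetaC m ^ B := by
  rw [zeta_pow_mod hm A, zeta_pow_mod hm B, h]

lemma Dmat_shift [NeZero m] (a b : Fin n → Fin m) (c : Fin m) :
    Dmat m n (fun i => a i + c) b
      = (∏ j, zetaC m ^ ((c : ℕ) * (b j : ℕ))) * Dmat m n a b := by
  have hm : m ≠ 0 := NeZero.ne m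
  have hentry : ∀ i j : Fin n, zetaC m ^ (((a i + c : Fin m) : ℕ) * (b j : ℕ))
      = zetaC m ^ ((c : ℕ) * (b j : ℕ)) * zetaC m ^ ((a i : ℕ) * (b j : ℕ)) := by
    intro i j
    rw [← pow_add]
    apply zeta_pow_congr hm
    rw [Fin.val_add]
    have h1 : ((((a i : ℕ) + (c : ℕ)) % m) * (b j : ℕ)) % m
        = (((a i : ℕ) + (c : ℕ)) * (b j : ℕ)) % m :=
      (Nat.mod_modEq ((a i : ℕ) + (c : ℕ)) m).mul_right _
    rw [h1]
    congr 1
    ring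
  have : (Matrix.of fun i j : Fin n => zetaC m ^ (((a i + c : Fin m) : ℕ) * (b j : ℕ)))
      = Matrix.of fun i j : Fin n =>
        (fun j : Fin n => zetaC m ^ ((c : ℕ) * (b j : ℕ))) j *
        (Matrix.of fun i j : Fin n => zetaC m ^ ((a i : ℕ) * (b j : ℕ))) i j := by
    ext i j
    exact hentry i j
  rw [Dmat, this, Matrix.det_mul_row]
  rfl

lemma Nsq_shift_fun [NeZero m] (b : Fin n → Fin m) (a : Fin n → Fin m) (c : Fin m) :
    Nsq m n b (fun i => a i + c) = Nsq m n b a := by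
  have hm : m ≠ 0 := NeZero.ne m
  rw [Nsq, Nsq, Dmat_shift, map_mul]
  have : Complex.normSq (∏ j, zetaC m ^ ((c : ℕ) * (b j : ℕ))) = 1 := by
    rw [Complex.normSq_eq_norm_sq, norm_prod]
    have : ∀ j : Fin n, ‖zetaC m ^ ((c : ℕ) * (b j : ℕ))‖ = 1 := fun j => by
      rw [norm_pow, abs_zeta hm, one_pow]
    rw [Finset.prod_congr rfl (fun j _ => this j)]
    simp
  rw [this, one_mul]

lemma Nsq_shift_set [NeZero m] (b : Fin n → Fin m) (S : Finset (Fin m))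
    (hS : S.card = n) (c : Fin m) (h' : (Finset.image (· + c) S).card = n) :
    Nsq m n b (fun i => ((Finset.image (· + c) S).orderIsoOfFin h' i : Fin m))
      = Nsq m n b (fun i => (S.orderIsoOfFin hS i : Fin m)) := by
  have hgi : Function.Injective (fun i => (S.orderIsoOfFin hS i : Fin m) + c) :=
    fun i j h => oIso_injective hS (add_right_cancel h)
  have hgm : ∀ i, (S.orderIsoOfFin hS i : Fin m) + c ∈ Finset.image (· + c) S :=
    fun i => Finset.mem_image_of_mem _ (S.orderIsoOfFin hS i).2
  rw [← Nsq_oIso h' b _ hgi hgm, Nsq_shift_fun]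

lemma fin_sub_val (t s x : Fin m) [NeZero m] :
    ((t - x : Fin m) : ℕ) = (((t - s : Fin m) : ℕ) + ((s - x : Fin m) : ℕ)) % m := by
  rw [← sub_add_sub_cancel t s x, Fin.val_add]

lemma fin_le_iff [NeZero m] (t s x : Fin m) :
    ((s - x : Fin m) : ℕ) ≤ ((t - x : Fin m) : ℕ) ↔
      ((t - s : Fin m) : ℕ) + ((s - x : Fin m) : ℕ) < m := by
  rw [fin_sub_val t s x]
  set e := ((t - s : Fin m) : ℕ)
  set d := ((s - x : Fin m) : ℕ)
  have he : e < m := (t - s).isLt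
  have hd : d < m := (s - x).isLt
  constructor
  · intro h
    by_contra hc
    push_neg at hc
    have h2 : (e + d) % m = e + d - m := by
      rw [Nat.mod_eq_sub_mod hc, Nat.mod_eq_of_lt (by omega)]
    omega
  · intro h
    rw [Nat.mod_eq_of_lt h]
    omega

/-- The cyclic "gap sum" identity. -/
lemma gap_sum [NeZero m] (S : Finset (Fin m)) (hne : S.Nonempty) :
    ∑ s ∈ S, (m - 1 -
      (((Finset.image (fun t => t - s) S).max' (hne.image _) : Fin m) : ℕ))
    = m - S.card := by
  classical
  set M : Fin m → ℕ := fun s => (((Finset.image (fun t => t - s) S).max' (hne.image _) : Fin m) : ℕ)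
    with hM
  have hMle : ∀ s, ∀ t ∈ S, ((t - s : Fin m) : ℕ) ≤ M s := by
    intro s t ht
    exact Fin.le_def.mp (Finset.le_max' _ _ (Finset.mem_image_of_mem (fun t => t - s) ht))
  have hMmem : ∀ s, ∃ t ∈ S, ((t - s : Fin m) : ℕ) = M s := by
    intro s
    obtain ⟨t, ht, h⟩ := Finset.mem_image.mp (Finset.max'_mem _ (hne.image (fun t => t - s)))
    exact ⟨t, ht, by rw [h]⟩
  have hMlt : ∀ s, M s < m := fun s => ((Finset.image (fun t => t - s) S).max' _).isLt
  set P : Fin m → Fin m → Prop := fun s x =>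
    0 < ((s - x : Fin m) : ℕ) ∧ ∀ t ∈ S, ((s - x : Fin m) : ℕ) ≤ ((t - x : Fin m) : ℕ)
    with hP
  -- characterize P via the max
  have hPiff : ∀ s x, P s x ↔
      0 < ((s - x : Fin m) : ℕ) ∧ M s + ((s - x : Fin m) : ℕ) < m := by
    intro s x
    rw [hP]
    simp only
    constructor
    · rintro ⟨h0, hall⟩
      refine ⟨h0, ?_⟩
      obtain ⟨t, ht, hts⟩ := hMmem s
      rw [← hts]
      exact (fin_le_iff t s x).mp (hall t ht)
    · rintro ⟨h0, hlt⟩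
      refine ⟨h0, fun t ht => (fin_le_iff t s x).mpr ?_⟩
      have := hMle s t ht
      omega
  -- count the fibre of each s
  have hcount : ∀ s ∈ S, (Finset.univ.filter (P s)).card = m - 1 - M s := by
    intro s _
    have : (Finset.univ.filter (P s)).card = (Finset.Ico 1 (m - M s)).card := by
      apply Finset.card_bij (fun x _ => ((s - x : Fin m) : ℕ))
      · intro x hx
        have := (hPiff s x).mp (Finset.mem_filter.mp hx).2
        rw [Finset.mem_Ico]
        omega
      · intro x hx y hy h
        have : s - x = s - y := Fin.ext h
        have := sub_right_injective this
        exact this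
      · intro k hk
        rw [Finset.mem_Ico] at hk
        have hkm : k < m := by have := hMlt s; omega
        refine ⟨s - (⟨k, hkm⟩ : Fin m), ?_, ?_⟩
        · have hd : ((s - (s - (⟨k, hkm⟩ : Fin m)) : Fin m) : ℕ) = k := by
            rw [sub_sub_cancel]
          refine Finset.mem_filter.mpr ⟨Finset.mem_univ _, (hPiff s _).mpr ?_⟩
          rw [hd]
          omega
        · rw [sub_sub_cancel]
    rw [this, Nat.card_Ico]
    omega
  -- the fibres partition the complement of S
  have hdisj : (S : Set (Fin m)).PairwiseDisjoint (fun s => Finset.univ.filter (P s)) := by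
    intro s hs s' hs' hss'
    refine Finset.disjoint_left.mpr fun x hx hx' => ?_
    have h1 := (Finset.mem_filter.mp hx).2
    have h2 := (Finset.mem_filter.mp hx').2
    have e1 := le_antisymm (h1.2 s' hs') (h2.2 s hs)
    have : s - x = s' - x := Fin.ext e1
    exact hss' (sub_left_injective this)
  have hcover : S.biUnion (fun s => Finset.univ.filter (P s))
      = Finset.univ.filter (fun x => x ∉ S) := by
    apply Finset.Subset.antisymm
    · intro x hx
      obtain ⟨s, hs, hxs⟩ := Finset.mem_biUnion.mp hx
      have h1 := (Finset.mem_filter.mp hxs).2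
      refine Finset.mem_filter.mpr ⟨Finset.mem_univ _, fun hxS => ?_⟩
      have := h1.2 x hxS
      rw [sub_self] at this
      simp at this
      exact absurd h1.1 (by simp [this])
    · intro x hx
      have hxS := (Finset.mem_filter.mp hx).2
      set K := S.image (fun t => ((t - x : Fin m) : ℕ)) with hK
      have hKne : K.Nonempty := hne.image _
      obtain ⟨t, ht, htk⟩ := Finset.mem_image.mp (Finset.min'_mem K hKne)
      refine Finset.mem_biUnion.mpr ⟨t, ht, Finset.mem_filter.mpr ⟨Finset.mem_univ _, ?_, ?_⟩⟩
      · rcases Nat.eq_zero_or_pos ((t - x : Fin m) : ℕ) with h | h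
        swap
        · exact h
        · exfalso
          have : t - x = 0 := Fin.ext (by simpa using h)
          have : t = x := by
            have := sub_eq_zero.mp this
            exact this
          exact hxS (this ▸ ht)
      · intro u hu
        rw [htk]
        exact Finset.min'_le K _ (Finset.mem_image_of_mem _ hu)
  have hsum : ∑ s ∈ S, (Finset.univ.filter (P s)).card
      = (Finset.univ.filter (fun x => x ∉ S)).card := by
    rw [← hcover, Finset.card_biUnion]
    intro s hs t ht hst
    exact hdisj hs ht hst
  have hcompl : (Finset.univ.filter (fun x => x ∉ S)).card = m - S.card := by
    have h1 : Finset.univ.filter (fun x => x ∈ S) = S := by ext x; simp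
    rw [Finset.filter_not, h1, Finset.card_sdiff_of_subset (Finset.subset_univ S),
      Finset.card_univ, Fintype.card_fin]
  rw [Finset.sum_congr rfl hcount] at hsum
  rw [hsum, hcompl]

lemma max'_congr {T T' : Finset (Fin m)} (h : T.Nonempty) (hTT : T = T') :
    T.max' h = T'.max' (hTT ▸ h) := by subst hTT; rfl

/-- Zagier's lemma, equation (4). Let `m > n ≥ 1`, and let `Q₀`
be the collection of `n`-element subsets `A ⊆ {0, …, m-1}` with `0 ∈ A`; set
`γ(A) = m - 1 - max A`. Then for every `n`-element subset `B`:
`∑_{A ∈ Q₀} γ(A) |Δ_{A,B}|² = (m - n) mⁿ⁻¹`. -/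
theorem zagier_sum_gamma_abs_sq_delta (m n : ℕ) (hn : 1 ≤ n) (hm : n < m)
    (B : Finset (Fin m)) (hB : B.card = n) :
    ∑ A : {A : Finset (Fin m) // A.card = n ∧ (⟨0, by omega⟩ : Fin m) ∈ A},
      ((m - 1 - ((A.1.max' ⟨_, A.2.2⟩ : Fin m) : ℕ) : ℕ) : ℝ) *
        ‖DeltaMinor m n A.1 B A.2.1 hB‖ ^ 2 =
      (((m - n) * m ^ (n - 1) : ℕ) : ℝ) := by
  classical
  haveI : NeZero m := ⟨by omega⟩
  set b : Fin n → Fin m := fun j => (B.orderIsoOfFin hB j : Fin m) with hbdef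
  have hb : Function.Injective b := oIso_injective hB
  set Q0 := {A : Finset (Fin m) // A.card = n ∧ (⟨0, by omega⟩ : Fin m) ∈ A} with hQ0
  set Sn := {S : Finset (Fin m) // S.card = n} with hSn
  -- rewrite summand via Nsq
  have habs : ∀ (A : Finset (Fin m)) (hA : A.card = n),
      ‖DeltaMinor m n A B hA hB‖ ^ 2
        = Nsq m n b (fun i => (A.orderIsoOfFin hA i : Fin m)) := by
    intro A hA
    rw [Complex.sq_norm]
    rfl
  set L : ℝ := ∑ A : Q0,
      ((m - 1 - ((A.1.max' ⟨_, A.2.2⟩ : Fin m) : ℕ) : ℕ) : ℝ) *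
        ‖DeltaMinor m n A.1 B A.2.1 hB‖ ^ 2 with hL
  -- key identity : m * L = (m - n) * m ^ n
  have hcard_shift : ∀ (A : Finset (Fin m)), A.card = n → ∀ c : Fin m,
      (Finset.image (· + c) A).card = n := by
    intro A hA c
    rw [Finset.card_image_of_injective _ (add_left_injective c), hA]
  have key : (m : ℝ) * L = (((m - n : ℕ)) : ℝ) * (m : ℝ) ^ n := by
    have h1 : (m : ℝ) * L = ∑ _c : Fin m, L := by
      rw [Finset.sum_const, Finset.card_univ, Fintype.card_fin, nsmul_eq_mul]
    rw [h1, hL]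
    have h2 : ∑ _c : Fin m, ∑ A : Q0,
        ((m - 1 - ((A.1.max' ⟨_, A.2.2⟩ : Fin m) : ℕ) : ℕ) : ℝ) *
          ‖DeltaMinor m n A.1 B A.2.1 hB‖ ^ 2
        = ∑ p ∈ (Finset.univ : Finset (Fin m × Q0)),
          ((m - 1 - ((p.2.1.max' ⟨_, p.2.2.2⟩ : Fin m) : ℕ) : ℕ) : ℝ) *
            ‖DeltaMinor m n p.2.1 B p.2.2.1 hB‖ ^ 2 := by
      rw [← Finset.univ_product_univ, Finset.sum_product]
    rw [h2]
    -- target sigma sum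
    have h3 : ∑ p ∈ (Finset.univ : Finset (Fin m × Q0)),
        ((m - 1 - ((p.2.1.max' ⟨_, p.2.2.2⟩ : Fin m) : ℕ) : ℕ) : ℝ) *
          ‖DeltaMinor m n p.2.1 B p.2.2.1 hB‖ ^ 2
        = ∑ q ∈ (Finset.univ : Finset Sn).sigma (fun S => S.1),
          ((m - 1 - (((Finset.image (fun t => t - q.2) q.1.1).max'
              ((Finset.card_pos.mp (by rw [q.1.2]; omega)).image _) : Fin m) : ℕ) : ℕ) : ℝ) *
            Nsq m n b (fun i => (q.1.1.orderIsoOfFin q.1.2 i : Fin m)) := by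
      refine Finset.sum_bij'
        (fun (p : Fin m × Q0) (_ : p ∈ Finset.univ) =>
          (⟨⟨Finset.image (· + p.1) p.2.1, hcard_shift p.2.1 p.2.2.1 p.1⟩, p.1⟩ :
            Σ S : Sn, Fin m))
        (fun q hq =>
          ((q.2, ⟨Finset.image (fun t => t - q.2) q.1.1, by
            constructor
            · rw [Finset.card_image_of_injective _ sub_left_injective, q.1.2]
            · refine Finset.mem_image.mpr ⟨q.2, ?_, ?_⟩
              · exact (Finset.mem_sigma.mp hq).2
              · rw [sub_self]
                exact Fin.ext (by simp [Fin.val_zero])⟩) : Fin m × Q0))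
        ?_ ?_ ?_ ?_ ?_
      · intro p _
        refine Finset.mem_sigma.mpr ⟨Finset.mem_univ _, ?_⟩
        refine Finset.mem_image.mpr ⟨⟨0, by omega⟩, p.2.2.2, ?_⟩
        show (⟨0, by omega⟩ : Fin m) + p.1 = p.1
        have : (⟨0, by omega⟩ : Fin m) = 0 := Fin.ext (by simp [Fin.val_zero])
        rw [this, zero_add]
      · intro q _
        exact Finset.mem_univ _
      · -- left inverse
        intro p _
        have hset : Finset.image (fun t => t - p.1) (Finset.image (· + p.1) p.2.1)
            = p.2.1 := by
          rw [Finset.image_image]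
          have : ((fun t => t - p.1) ∘ (· + p.1)) = id := by
            funext x; simp
          rw [this, Finset.image_id]
        exact Prod.ext rfl (Subtype.ext hset)
      · -- right inverse
        intro q hq
        have hmem : q.2 ∈ q.1.1 := (Finset.mem_sigma.mp hq).2
        have hset : Finset.image (· + q.2) (Finset.image (fun t => t - q.2) q.1.1)
            = q.1.1 := by
          rw [Finset.image_image]
          have : ((· + q.2) ∘ (fun t => t - q.2)) = id := by
            funext x; simp
          rw [this, Finset.image_id]
        show (⟨⟨Finset.image (· + q.2) (Finset.image (fun t => t - q.2) q.1.1), _⟩, q.2⟩ :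
          Σ S : Sn, Fin m) = q
        congr 1
        · exact Subtype.ext hset
      · -- summand equality
        intro p _
        have hA := p.2.2.1
        have hset : Finset.image (fun t => t - p.1) (Finset.image (· + p.1) p.2.1)
            = p.2.1 := by
          rw [Finset.image_image]
          have : ((fun t => t - p.1) ∘ (· + p.1)) = id := by
            funext x; simp
          rw [this, Finset.image_id]
        have hmax : (Finset.image (fun t => t - p.1) (Finset.image (· + p.1) p.2.1)).max'
              (((Finset.card_pos.mp (by rw [hcard_shift p.2.1 hA p.1]; omega)).image _))
            = p.2.1.max' ⟨_, p.2.2.2⟩ := by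
          rw [max'_congr _ hset]
        rw [habs p.2.1 hA]
        rw [← Nsq_shift_set b p.2.1 hA p.1 (hcard_shift p.2.1 hA p.1)]
        congr 1
        rw [hmax]
    rw [h3]
    rw [Finset.sum_sigma]
    have h4 : ∀ S : Sn, S ∈ (Finset.univ : Finset Sn) →
        (∑ s ∈ S.1,
          ((m - 1 - (((Finset.image (fun t => t - s) S.1).max'
              ((Finset.card_pos.mp (by rw [S.2]; omega)).image _) : Fin m) : ℕ) : ℕ) : ℝ) *
            Nsq m n b (fun i => (S.1.orderIsoOfFin S.2 i : Fin m)))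
        = ((m - n : ℕ) : ℝ) * Nsq m n b (fun i => (S.1.orderIsoOfFin S.2 i : Fin m)) := by
      intro S _
      rw [← Finset.sum_mul]
      congr 1
      rw [← Nat.cast_sum]
      rw [gap_sum S.1 (Finset.card_pos.mp (by rw [S.2]; omega))]
      rw [S.2]
    rw [Finset.sum_congr rfl h4, ← Finset.mul_sum, sum_over_subsets (by omega) b hb]
  -- conclude
  have hm0 : (m : ℝ) ≠ 0 := Nat.cast_ne_zero.mpr (by omega)
  apply mul_left_cancel₀ hm0
  rw [key]
  have : m * ((m - n) * m ^ (n - 1)) = (m - n) * m ^ n := by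
    have hpow : m * m ^ (n - 1) = m ^ n := by
      conv_rhs => rw [show n = (n - 1) + 1 by omega]
      rw [pow_succ]
      ring
    calc m * ((m - n) * m ^ (n - 1)) = (m - n) * (m * m ^ (n - 1)) := by ring
      _ = (m - n) * m ^ n := by rw [hpow]
  rw [show ((m : ℝ) * (((m - n) * m ^ (n - 1) : ℕ) : ℝ))
      = ((m * ((m - n) * m ^ (n - 1)) : ℕ) : ℝ) by push_cast; ring, this]
  push_cast
  ring

end ZagierAux
end

section
/- Let m > n ≥ 1, and Q̄ the set of cyclically strictly decreasing maps α : ℤ/n → ℤ/m. The cyclic group C_n = ℤ/n acts on Q̄ by α ↦ α(·+j), and the map sending α to its image (an n-element subset of ℤ/m) identifies the quotient Q̄/C_n with the set Q of n-element subsets of ℤ/m. In particular |Q̄| = n · C(m,n). -/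
/-- A map `α : ℤ/n → ℤ/m` is cyclically strictly decreasing if it admits a lift
`a : ℤ → ℤ` with `a(i) > a(i+1)` for all `i` and `a(i+n) = a(i) - m`. -/
def CyclicallyStrictlyDecreasing (n m : ℕ) (α : ZMod n → ZMod m) : Prop :=
  ∃ a : ℤ → ℤ,
    (∀ i : ℤ, ((a i : ZMod m)) = α (i : ZMod n)) ∧
    (∀ i : ℤ, a (i + 1) < a i) ∧
    (∀ i : ℤ, a (i + n) = a i - m)

/-! A lift `a` of a cyclically strictly decreasing `α` satisfies `a 0 ≥ a k > a n = a 0 - m`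
for `0 ≤ k < n`, so the offset `(α 0 - α k).val` equals `a 0 - a k` and strictly increases in
`k`; conversely, strictly increasing offsets yield a lift by quasi-periodic extension. Thus `α` is
determined by `α 0` and its image `B`: its offsets are the distances below `α 0` of the points
of `B`, in increasing order. So `α ↦ (range α, α 0)` is a bijection onto pairs `(B, x)` with
`x ∈ B`, which gives both the orbit description (rotating `α` moves any point of `B` to position
`0`) and the count `n * m.choose n`. -/

theorem ZMod.finEquiv_apply {n : ℕ} [NeZero n] (k : Fin n) : ZMod.finEquiv n k = (k : ℕ) := by
  cases n with
  | zero => exact absurd rfl (NeZero.ne 0)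
  | succ n => exact (Fin.cast_val_eq_self k).symm

theorem strictAnti_of_quasiperiodic_of_succ_lt {a : ℤ → ℤ} {n : ℕ} {m : ℤ} (hn : n ≠ 0)
    (hper : ∀ i, a (i + n) = a i - m) (hstep : ∀ j < n, a (j + 1) < a j) : StrictAnti a := by
  have hdiff : Function.Periodic (fun i => a i - a (i + 1)) n := fun i => by
    simp only [add_right_comm i n 1, hper]; ring
  refine strictAnti_int_of_succ_lt fun i => ?_
  have hmod : 0 ≤ i % n := Int.emod_nonneg i (by exact_mod_cast hn)
  lift i % n to ℕ using hmod with j hj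
  have hjn : j < n := by exact_mod_cast hj ▸ Int.emod_lt_of_pos i (by omega)
  have := hdiff.sub_int_mul_eq (x := i) (i / n)
  rw [Int.cast_id, mul_comm, ← Int.emod_def, ← hj] at this
  have := hstep j hjn
  omega

namespace CyclicallyStrictlyDecreasing

variable {n m : ℕ} {α β : ZMod n → ZMod m}

def offset (α : ZMod n → ZMod m) (t : ZMod n) : ℕ := (α 0 - α t).val

theorem natCast_offset [NeZero m] (α : ZMod n → ZMod m) (t : ZMod n) :
    (offset α t : ZMod m) = α 0 - α t :=
  ZMod.natCast_zmod_val _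

theorem comp_add_right (hα : CyclicallyStrictlyDecreasing n m α) (j : ZMod n) :
    CyclicallyStrictlyDecreasing n m (fun t => α (t + j)) := by
  obtain ⟨a, hlift, hdec, hper⟩ := hα
  obtain ⟨k, rfl⟩ := ZMod.intCast_surjective j
  refine ⟨fun i => a (i + k), fun i => by simp [hlift], fun i => ?_, fun i => ?_⟩
  · simpa only [add_right_comm i] using hdec (i + k)
  · simpa only [add_right_comm i] using hper (i + k)

variable [NeZero n] [NeZero m]

theorem strictMono_offset (hα : CyclicallyStrictlyDecreasing n m α) :
    StrictMono fun k => offset α (ZMod.finEquiv n k) := by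
  obtain ⟨a, hlift, hdec, hper⟩ := hα
  have ha : StrictAnti a := strictAnti_int_of_succ_lt hdec
  have hoffset : ∀ k : Fin n, (offset α (ZMod.finEquiv n k) : ℤ) = a 0 - a k := by
    intro k
    have hle : a k ≤ a 0 := ha.antitone (by positivity)
    have hlt : a 0 - m < a k := by
      rw [← hper 0, zero_add]; exact ha (by exact_mod_cast k.isLt)
    have hcast : α 0 - α (ZMod.finEquiv n k) = ((a 0 - a k : ℤ) : ZMod m) := by
      rw [ZMod.finEquiv_apply, Int.cast_sub, hlift, hlift]; simp
    rw [offset, hcast, ZMod.val_intCast, Int.emod_eq_of_lt (by omega) (by omega)]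
  intro j k hjk
  dsimp only
  have := ha (show (j : ℤ) < k by exact_mod_cast hjk)
  have := hoffset j
  have := hoffset k
  omega

theorem of_strictMono_offset (h : StrictMono fun k => offset α (ZMod.finEquiv n k)) :
    CyclicallyStrictlyDecreasing n m α := by
  have hn : (n : ℤ) ≠ 0 := by exact_mod_cast NeZero.ne n
  set a : ℤ → ℤ := fun i => (α 0).val - offset α i - m * (i / n) with ha
  have hper : ∀ i, a (i + n) = a i - m := fun i => by
    have : (i + n) / n = i / n + 1 := by simpa using Int.add_mul_ediv_right i 1 hn
    simp only [ha, Int.cast_add, Int.cast_natCast, ZMod.natCast_self, add_zero, this]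
    ring
  have haNat : ∀ j (hj : j < n), a j = (α 0).val - offset α (ZMod.finEquiv n ⟨j, hj⟩) := by
    intro j hj
    simp [ha, ZMod.finEquiv_apply, Int.ediv_eq_zero_of_lt, hj]
  have hstep : ∀ j < n, a (j + 1) < a j := by
    intro j hj
    rw [haNat j hj]
    rcases (Nat.succ_le_of_lt hj).lt_or_eq with hj1 | hj1
    · have hlt : offset α _ < offset α _ :=
        h (show (⟨j, hj⟩ : Fin n) < ⟨j + 1, hj1⟩ from Nat.lt_succ_self j)
      have := haNat (j + 1) hj1
      push_cast at this
      omega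
    · have hlt : offset α (ZMod.finEquiv n ⟨j, hj⟩) < m := ZMod.val_lt _
      have h0 : offset α (ZMod.finEquiv n ⟨0, NeZero.pos n⟩) = 0 := by
        simp [offset, ZMod.finEquiv_apply]
      rw [← Nat.cast_succ, hj1, ← zero_add (n : ℤ), hper, ← Nat.cast_zero,
        haNat 0 (NeZero.pos n), h0]
      omega
  refine ⟨a, fun i => ?_, fun i => ?_, hper⟩
  · simp [ha, natCast_offset]
  · exact strictAnti_of_quasiperiodic_of_succ_lt (NeZero.ne n) hper hstep (lt_add_one i)

theorem injective (hα : CyclicallyStrictlyDecreasing n m α) : Function.Injective α := by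
  intro s t hst
  obtain ⟨k, rfl⟩ := (ZMod.finEquiv n).surjective s
  obtain ⟨l, rfl⟩ := (ZMod.finEquiv n).surjective t
  rw [hα.strictMono_offset.injective (by simp only [offset, hst] :
    offset α (ZMod.finEquiv n k) = offset α (ZMod.finEquiv n l))]

theorem eq_of_range_eq_of_apply_zero_eq (hα : CyclicallyStrictlyDecreasing n m α)
    (hβ : CyclicallyStrictlyDecreasing n m β) (hr : Set.range α = Set.range β) (h0 : α 0 = β 0) :
    α = β := by
  have hrange (γ : ZMod n → ZMod m) : Set.range (fun k => offset γ (ZMod.finEquiv n k)) =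
      (fun y => (γ 0 - y).val) '' Set.range γ := by
    rw [← EquivLike.range_comp γ (ZMod.finEquiv n), ← Set.range_comp]
    rfl
  have hoffset := (hα.strictMono_offset.range_inj hβ.strictMono_offset).1
    (by rw [hrange, hrange, hr, h0])
  funext t
  obtain ⟨k, rfl⟩ := (ZMod.finEquiv n).surjective t
  rw [← sub_sub_cancel (α 0) (α _), ← natCast_offset, congrFun hoffset k, natCast_offset, h0,
    sub_sub_cancel]

theorem range_eq_range_iff (hα : CyclicallyStrictlyDecreasing n m α)
    (hβ : CyclicallyStrictlyDecreasing n m β) :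
    Set.range α = Set.range β ↔ ∃ j : ZMod n, ∀ t, β t = α (t + j) := by
  constructor
  · intro hr
    obtain ⟨j, hj⟩ : α 0 ∈ Set.range β := hr ▸ Set.mem_range_self 0
    have hrot : α = fun t => β (t + j) := by
      refine eq_of_range_eq_of_apply_zero_eq hα (hβ.comp_add_right j) ?_ (by simp [hj])
      rw [hr, ← (Equiv.addRight j).surjective.range_comp]
      rfl
    exact ⟨-j, fun t => by simp [hrot]⟩
  · rintro ⟨j, hj⟩
    rw [funext hj, ← (Equiv.addRight j).surjective.range_comp]
    rfl

theorem exists_range_eq_of_mem {B : Finset (ZMod m)} (hB : B.card = n) {x : ZMod m}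
    (hx : x ∈ B) : ∃ α, CyclicallyStrictlyDecreasing n m α ∧ α 0 = x ∧ Set.range α = B := by
  classical
  set S := B.image fun y => (x - y).val
  have hS : S.card = n := by
    rw [Finset.card_image_of_injOn fun y _ z _ h => by simpa using ZMod.val_injective m h, hB]
  set c := S.orderEmbOfFin hS
  have hc0 : c ⟨0, NeZero.pos n⟩ = 0 := by
    rw [Finset.orderEmbOfFin_zero]
    exact Nat.le_zero.1 (Finset.min'_le _ _ (Finset.mem_image.2 ⟨x, hx, by simp⟩))
  have hcm (k : Fin n) : c k < m := by
    obtain ⟨y, -, hy⟩ := Finset.mem_image.1 (S.orderEmbOfFin_mem hS k)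
    exact hy ▸ ZMod.val_lt _
  set α : ZMod n → ZMod m := fun t => x - c ((ZMod.finEquiv n).symm t)
  have hα (k : Fin n) : α (ZMod.finEquiv n k) = x - c k := by simp [α]
  have hα0 : α 0 = x := by
    have : (0 : ZMod n) = ZMod.finEquiv n ⟨0, NeZero.pos n⟩ := by simp [ZMod.finEquiv_apply]
    rw [this, hα, hc0, Nat.cast_zero, sub_zero]
  have hoffset (k : Fin n) : offset α (ZMod.finEquiv n k) = c k := by
    rw [offset, hα0, hα, sub_sub_cancel, ZMod.val_cast_of_lt (hcm k)]
  refine ⟨α, of_strictMono_offset (by simpa only [hoffset] using c.strictMono), hα0, ?_⟩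
  rw [← EquivLike.range_comp α (ZMod.finEquiv n)]
  ext y
  simp only [Set.mem_range, Function.comp_apply, hα, Finset.mem_coe]
  constructor
  · rintro ⟨k, rfl⟩
    obtain ⟨z, hz, hzk⟩ := Finset.mem_image.1 (S.orderEmbOfFin_mem hS k)
    rwa [← hzk, ZMod.natCast_zmod_val, sub_sub_cancel]
  · intro hy
    have : (x - y).val ∈ Set.range c := by
      rw [Finset.range_orderEmbOfFin]
      exact Finset.mem_image.2 ⟨y, hy, rfl⟩
    obtain ⟨k, hk⟩ := this
    exact ⟨k, by rw [hk, ZMod.natCast_zmod_val, sub_sub_cancel]⟩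

theorem card_eq_mul_choose :
    Nat.card {α : ZMod n → ZMod m // CyclicallyStrictlyDecreasing n m α} = n * m.choose n := by
  classical
  rw [Nat.card_eq_fintype_card, Fintype.card_subtype]
  calc (Finset.univ.filter fun α => CyclicallyStrictlyDecreasing n m α).card
      = ((Finset.univ.powersetCard n).sigma fun B : Finset (ZMod m) => B).card := by
        refine Finset.card_bij (fun α _ => ⟨Finset.univ.image α, α 0⟩) ?_ ?_ ?_
        · intro α hα
          rw [Finset.mem_filter] at hα
          simp [Finset.mem_powersetCard, Finset.card_image_of_injective _ hα.2.injective]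
        · intro α hα β hβ h
          rw [Finset.mem_filter] at hα hβ
          obtain ⟨hr, h0⟩ := Sigma.mk.inj_iff.1 h
          refine eq_of_range_eq_of_apply_zero_eq hα.2 hβ.2 ?_ (heq_iff_eq.1 h0)
          simpa using congrArg ((↑) : Finset (ZMod m) → Set (ZMod m)) hr
        · rintro ⟨B, x⟩ hBx
          rw [Finset.mem_sigma, Finset.mem_powersetCard] at hBx
          obtain ⟨α, hα, h0, hr⟩ := exists_range_eq_of_mem hBx.1.2 hBx.2
          refine ⟨α, Finset.mem_filter.2 ⟨Finset.mem_univ α, hα⟩, ?_⟩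
          have hB : Finset.univ.image α = B := Finset.coe_inj.1 (by simpa using hr)
          rw [h0, hB]
    _ = n * m.choose n := by
        rw [Finset.card_sigma, Finset.sum_const_nat fun B hB => (Finset.mem_powersetCard.1 hB).2,
          Finset.card_powersetCard, Finset.card_univ, ZMod.card, mul_comm]

end CyclicallyStrictlyDecreasing

/-- For `m > n ≥ 1`, the cyclic group `C_n = ℤ/n` acts on the
set `Q̄` of cyclically strictly decreasing maps `ℤ/n → ℤ/m` by `α ↦ α(· + j)`,
and the map `α ↦ range α` identifies `Q̄/C_n` with the set `Q` of `n`-element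
subsets of `ℤ/m`: it is surjective onto `Q`, its fibers are exactly the
`C_n`-orbits, and consequently `|Q̄| = n ⋅ C(m, n)`. -/
theorem Qbar_mod_Cn_equiv_subsets (n m : ℕ) (hn : 1 ≤ n) (hm : n < m) :
    (∀ B : Finset (ZMod m), B.card = n →
      ∃ α : ZMod n → ZMod m, CyclicallyStrictlyDecreasing n m α ∧
        ∀ x : ZMod m, x ∈ B ↔ x ∈ Set.range α) ∧
    (∀ α β : ZMod n → ZMod m,
      CyclicallyStrictlyDecreasing n m α → CyclicallyStrictlyDecreasing n m β →
        (Set.range α = Set.range β ↔ ∃ j : ZMod n, ∀ t, β t = α (t + j))) ∧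
    Nat.card {α : ZMod n → ZMod m // CyclicallyStrictlyDecreasing n m α} =
      n * m.choose n := by
  have : NeZero n := ⟨by omega⟩
  have : NeZero m := ⟨by omega⟩
  refine ⟨fun B hB => ?_, fun α β hα hβ => hα.range_eq_range_iff hβ,
    CyclicallyStrictlyDecreasing.card_eq_mul_choose⟩
  obtain ⟨x, hx⟩ := Finset.card_pos.1 (hB ▸ hn)
  obtain ⟨α, hα, -, hr⟩ := CyclicallyStrictlyDecreasing.exists_range_eq_of_mem hB hx
  exact ⟨α, hα, fun y => by rw [hr, Finset.mem_coe]⟩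
end

section
/- Let m = n + κ with n ≥ 1, κ ≥ 1. For every n-element subset B of ℤ/m: ∑_{A ∈ Q_0} γ(A)|Δ*_{A,B}|² = (m−n)/m, where Q_0 is the set of n-element subsets of ℤ/m containing 0, γ(A) = m − 1 − max(A) (max taken in the representatives {0,...,m−1}), and Δ*_{A,B} = m^{−n/2} det(ζ^{ab})_{a∈A,b∈B} with ζ = exp(2πi/m). -/
open scoped BigOperators

/-!
Let `N` be the block of columns `B` of the unitary matrix `M*`. Cauchy–Binet applied to
`Nᴴ N = 1` gives `∑_{|A| = n} |Δ*_{A,B}|² = 1`. Translating `A` by `t` multiplies the column `b` of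
the minor by `ζ^{tb}` and permutes its rows, so `|Δ*_{A,B}|` is translation invariant.
Counting the pairs `(A, a)` with `a ∈ A` through `(A - a, a)` gives
`∑_A ∑_{a ∈ A} F(A - a) = m ∑_{A ∋ 0} F(A)`. Finally `γ(A - a)` is the length of the cyclic gap
of `A` just before `a`; these gaps partition the complement of `A`, so `∑_{a ∈ A} γ(A - a) = m - n`,
and `m ∑_{A ∋ 0} γ(A) |Δ*_{A,B}|² = (m - n) ∑_A |Δ*_{A,B}|² = m - n`.
-/

open Finset Matrix Pointwise

namespace Tuple

variable {ι : Type*} [LinearOrder ι] {n : ℕ}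

theorem comp_sort_eq_orderEmbOfFin {f : Fin n → ι} (hf : Function.Injective f) {s : Finset ι}
    (hfs : ∀ i, f i ∈ s) (h : #s = n) : f ∘ sort f = s.orderEmbOfFin h :=
  orderEmbOfFin_unique h (fun _ => hfs _)
    ((monotone_sort f).strictMono_of_injective (hf.comp (sort f).injective))

theorem sort_orderEmbOfFin_comp {s : Finset ι} (h : #s = n) (σ : Equiv.Perm (Fin n)) :
    sort (s.orderEmbOfFin h ∘ σ) = σ⁻¹ := by
  have key := comp_sort_eq_orderEmbOfFin ((s.orderEmbOfFin h).injective.comp σ.injective)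
    (fun i => orderEmbOfFin_mem s h (σ i)) h
  exact eq_inv_of_mul_eq_one_right
    (Equiv.ext fun i => (s.orderEmbOfFin h).injective (congrFun key i))

theorem sum_injective_eq_sum_orderEmbOfFin_comp [Fintype ι] {M : Type*} [AddCommMonoid M]
    (g : (Fin n → ι) → M) :
    ∑ f with Function.Injective f, g f
      = ∑ A : {A : Finset ι // #A = n}, ∑ σ : Equiv.Perm (Fin n),
          g (A.1.orderEmbOfFin A.2 ∘ σ) := by
  rw [← Fintype.sum_prod_type']
  refine (sum_bij' (fun p _ => p.1.1.orderEmbOfFin p.1.2 ∘ p.2)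
    (fun f hf => (⟨univ.image f, (card_image_of_injective _ (mem_filter.1 hf).2).trans
      (card_fin n)⟩, (sort f)⁻¹)) ?_ (fun _ _ => mem_univ _) ?_ ?_ fun _ _ => rfl).symm
  · exact fun p _ => mem_filter.2 ⟨mem_univ _, (orderEmbOfFin _ _).injective.comp p.2.injective⟩
  · rintro ⟨⟨A, hA⟩, σ⟩ -
    have himage : univ.image (A.orderEmbOfFin hA ∘ σ) = A := by
      rw [← coe_inj, coe_image, coe_univ, Set.image_univ, EquivLike.range_comp,
        range_orderEmbOfFin]
    simp only [himage, sort_orderEmbOfFin_comp, inv_inv]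
  · intro f hf
    rw [← comp_sort_eq_orderEmbOfFin (mem_filter.1 hf).2 fun i => mem_image_of_mem f (mem_univ i)]
    ext i
    simp

end Tuple

namespace Matrix

section CauchyBinet

variable {R ι : Type*} [CommRing R] [Fintype ι] {n : ℕ}

theorem det_mul_eq_sum_prod_mul_det_submatrix (N : Matrix (Fin n) ι R)
    (P : Matrix ι (Fin n) R) :
    (N * P).det = ∑ f : Fin n → ι, (∏ i, N i (f i)) * (P.submatrix f id).det := by
  calc (N * P).det = (Pᵀ * Nᵀ).det := by rw [← det_transpose, transpose_mul]
    _ = ∑ f : Fin n → ι, (∏ i, N i (f i)) * (P.submatrix f id)ᵀ.det := by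
      simp only [det_apply', mul_apply, prod_univ_sum, Finset.mul_sum, Fintype.piFinset_univ,
        transpose_apply, submatrix_apply, id_eq, prod_mul_distrib]
      rw [Finset.sum_comm]
      exact sum_congr rfl fun f _ => sum_congr rfl fun σ _ => by ring
    _ = _ := by simp only [det_transpose]

/-- The Cauchy–Binet formula. -/
theorem det_mul_eq_sum_det_mul_det [LinearOrder ι] (N : Matrix (Fin n) ι R)
    (P : Matrix ι (Fin n) R) :
    (N * P).det = ∑ A : {A : Finset ι // #A = n},
      (N.submatrix id (A.1.orderEmbOfFin A.2)).det *
        (P.submatrix (A.1.orderEmbOfFin A.2) id).det := by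
  set g : (Fin n → ι) → R := fun f => (∏ i, N i (f i)) * (P.submatrix f id).det
  have g_eq_zero : ∀ f, ¬ Function.Injective f → g f = 0 := fun f hf => by
    obtain ⟨i, j, hij, hne⟩ : ∃ i j, f i = f j ∧ i ≠ j := by
      simpa [Function.Injective, and_comm] using hf
    have : (P.submatrix f id).det = 0 := det_zero_of_row_eq hne (by ext; simp [hij])
    simp only [g, this, mul_zero]
  have det_mul_det : ∀ A : {A : Finset ι // #A = n},
      (N.submatrix id (A.1.orderEmbOfFin A.2)).det * (P.submatrix (A.1.orderEmbOfFin A.2) id).det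
        = ∑ σ : Equiv.Perm (Fin n), g (A.1.orderEmbOfFin A.2 ∘ σ) := fun A => by
    rw [← det_transpose, det_apply', sum_mul]
    refine sum_congr rfl fun σ _ => ?_
    set e := A.1.orderEmbOfFin A.2
    have hP : (P.submatrix (e ∘ σ) id).det = Equiv.Perm.sign σ * (P.submatrix e id).det :=
      det_permute σ (P.submatrix e id)
    simp only [g, hP, transpose_apply, submatrix_apply, id_eq, Function.comp_apply]
    ring
  rw [det_mul_eq_sum_prod_mul_det_submatrix, sum_congr rfl fun A _ => det_mul_det A,
    ← Tuple.sum_injective_eq_sum_orderEmbOfFin_comp,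
    sum_filter_of_ne fun f _ hf => not_not.1 (mt (g_eq_zero f) hf)]

end CauchyBinet

variable {𝕜 ι : Type*} [RCLike 𝕜] [Fintype ι] [LinearOrder ι] {n : ℕ}

theorem sum_norm_sq_det_submatrix_of_conjTranspose_mul_self (N : Matrix ι (Fin n) 𝕜)
    (hN : Nᴴ * N = 1) :
    ∑ A : {A : Finset ι // #A = n}, ‖(N.submatrix (A.1.orderEmbOfFin A.2) id).det‖ ^ 2 = 1 := by
  have h := det_mul_eq_sum_det_mul_det Nᴴ N
  simp only [hN, det_one, ← conjTranspose_submatrix, det_conjTranspose, RCLike.star_def,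
    RCLike.conj_mul] at h
  exact_mod_cast h.symm

theorem sum_norm_sq_det_submatrix_of_mem_unitaryGroup {U : Matrix ι ι 𝕜}
    (hU : U ∈ unitaryGroup ι 𝕜) {B : Finset ι} (hB : #B = n) :
    ∑ A : {A : Finset ι // #A = n},
      ‖(U.submatrix (A.1.orderEmbOfFin A.2) (B.orderEmbOfFin hB)).det‖ ^ 2 = 1 := by
  refine sum_norm_sq_det_submatrix_of_conjTranspose_mul_self
    (U.submatrix id (B.orderEmbOfFin hB)) ?_
  rw [conjTranspose_submatrix, ← submatrix_mul _ _ _ _ _ Function.bijective_id,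
    ← star_eq_conjTranspose, mem_unitaryGroup_iff'.1 hU,
    submatrix_one _ (B.orderEmbOfFin hB).injective]

end Matrix

theorem sum_sum_neg_vadd_eq_card_nsmul_sum {G M : Type*} [AddGroup G] [Fintype G]
    [DecidableEq G] [AddCommMonoid M] (F : Finset G → M) :
    ∑ A : Finset G, ∑ a ∈ A, F (-a +ᵥ A) = Fintype.card G • ∑ A with (0 : G) ∈ A, F A := by
  calc ∑ A : Finset G, ∑ a ∈ A, F (-a +ᵥ A)
      = ∑ a : G, ∑ A : Finset G, if a ∈ A then F (-a +ᵥ A) else 0 := by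
        rw [sum_comm]
        simp only [sum_ite_mem, univ_inter]
    _ = ∑ _a : G, ∑ A : Finset G, if (0 : G) ∈ A then F A else 0 := by
        refine sum_congr rfl fun a _ => ?_
        rw [← Fintype.sum_bijective _ (AddAction.bijective a) _ _ fun A => rfl]
        simp only [← neg_vadd_mem_iff, neg_vadd_vadd, vadd_eq_add, neg_add_cancel]
    _ = Fintype.card G • ∑ A with (0 : G) ∈ A, F A := by
        rw [sum_const, card_univ, sum_filter]

section CyclicGaps

variable {m : ℕ}

def topGap (A : Finset (Fin m)) : ℕ :=
  #{y | ∀ b ∈ A, b < y}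

theorem topGap_eq_sub_max' {A : Finset (Fin m)} (hA : A.Nonempty) :
    topGap A = m - 1 - A.max' hA := by
  rw [topGap, ← Fin.card_Ioi]
  congr 1
  ext y
  simp [max'_lt_iff]

/-- The residues met after all of `A` when counting up cyclically from `a`; for `a ∈ A`, the gap
between the cyclic predecessor of `a` in `A` and `a`. -/
def cyclicGap (A : Finset (Fin m)) (a : Fin m) : Finset (Fin m) :=
  {c | ∀ b ∈ A, b - a < c - a}

theorem notMem_cyclicGap_of_mem {A : Finset (Fin m)} {c : Fin m} (hc : c ∈ A) (a : Fin m) :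
    c ∉ cyclicGap A a := by
  simp only [cyclicGap, mem_filter, mem_univ, true_and, not_forall]
  exact ⟨c, hc, lt_irrefl _⟩

variable [NeZero m]

theorem Fin.sub_lt_neg_iff {x y : Fin m} (hx : x ≠ 0) : y - x < -x ↔ x ≤ y := by
  rw [Fin.lt_def, Fin.val_neg, if_neg hx, Fin.le_def]
  rcases le_or_gt x y with h | h
  · rw [Fin.sub_val_of_le h]
    have := y.isLt
    simp only [Fin.le_def] at h
    omega
  · rw [Fin.coe_sub_iff_lt.2 h]
    simp only [Fin.lt_def] at h
    omega

theorem Fin.sub_lt_sub_iff_sub_le_sub {a b c : Fin m} (hac : a ≠ c) :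
    b - a < c - a ↔ a - c ≤ b - c := by
  rw [← sub_sub_sub_cancel_right b a c, ← neg_sub a c]
  exact Fin.sub_lt_neg_iff (sub_ne_zero.2 hac)

theorem mem_cyclicGap_iff {A : Finset (Fin m)} {a c : Fin m} (ha : a ∈ A) (hc : c ∉ A) :
    c ∈ cyclicGap A a ↔ ∀ b ∈ A, a - c ≤ b - c := by
  simp only [cyclicGap, mem_filter, mem_univ, true_and,
    Fin.sub_lt_sub_iff_sub_le_sub (ne_of_mem_of_not_mem ha hc)]

theorem pairwiseDisjoint_cyclicGap (A : Finset (Fin m)) :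
    (A : Set (Fin m)).PairwiseDisjoint (cyclicGap A) := by
  intro a ha a' ha' hne
  refine disjoint_left.2 fun c hca hca' => hne ?_
  by_cases hc : c ∈ A
  · exact absurd hca (notMem_cyclicGap_of_mem hc a)
  · exact sub_left_injective (le_antisymm ((mem_cyclicGap_iff ha hc).1 hca a' ha')
      ((mem_cyclicGap_iff ha' hc).1 hca' a ha))

theorem biUnion_cyclicGap {A : Finset (Fin m)} (hA : A.Nonempty) :
    A.biUnion (cyclicGap A) = Aᶜ := by
  ext c
  simp only [mem_biUnion, mem_compl]
  constructor
  · rintro ⟨a, -, hca⟩ hc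
    exact notMem_cyclicGap_of_mem hc a hca
  · intro hc
    obtain ⟨a, ha, hmin⟩ := A.exists_min_image (· - c) hA
    exact ⟨a, ha, (mem_cyclicGap_iff ha hc).2 hmin⟩

theorem card_cyclicGap (A : Finset (Fin m)) (a : Fin m) :
    #(cyclicGap A a) = topGap (-a +ᵥ A) := by
  rw [topGap, ← card_vadd_finset (-a)]
  congr 1
  ext y
  rw [mem_neg_vadd_finset_iff]
  simp only [cyclicGap, mem_filter, mem_univ, true_and, vadd_finset_def, forall_mem_image,
    vadd_eq_add, add_sub_cancel_left]
  simp only [sub_eq_neg_add]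

theorem sum_topGap_neg_vadd {A : Finset (Fin m)} (hA : A.Nonempty) :
    ∑ a ∈ A, topGap (-a +ᵥ A) = m - #A := by
  simp_rw [← card_cyclicGap]
  rw [← card_biUnion (pairwiseDisjoint_cyclicGap A), biUnion_cyclicGap hA, card_compl,
    Fintype.card_fin]

theorem natCast_mul_sum_topGap_mul {n : ℕ} (hn : n ≠ 0) {w : Finset (Fin m) → ℝ}
    (hw_vadd : ∀ (t : Fin m) A, w (t +ᵥ A) = w A) (hw_card : ∀ A, #A ≠ n → w A = 0) :
    m * ∑ A with (0 : Fin m) ∈ A, (topGap A : ℝ) * w A = ((m - n : ℕ) : ℝ) * ∑ A, w A := by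
  have h := sum_sum_neg_vadd_eq_card_nsmul_sum fun A : Finset (Fin m) => (topGap A : ℝ) * w A
  rw [Fintype.card_fin, nsmul_eq_mul] at h
  rw [← h, mul_sum]
  refine sum_congr rfl fun A _ => ?_
  simp only [hw_vadd, ← sum_mul]
  by_cases hA : #A = n
  · rw [← Nat.cast_sum, sum_topGap_neg_vadd (card_pos.1 (by omega)), hA, mul_comm]
  · rw [hw_card A hA, mul_zero, mul_zero]

end CyclicGaps

theorem norm_zetaC (m : ℕ) : ‖zetaC m‖ = 1 := by
  rw [zetaC, show 2 * (Real.pi : ℂ) * Complex.I / m = ((2 * Real.pi / m : ℝ) : ℂ) * Complex.I by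
    push_cast; ring, Complex.norm_exp_ofReal_mul_I]

theorem zetaC_pow_self (m : ℕ) : zetaC m ^ m = 1 := by
  rcases eq_or_ne m 0 with rfl | hm
  · exact pow_zero _
  · exact (Complex.isPrimitiveRoot_exp m hm).pow_eq_one

theorem sum_range_inv_zetaC_pow_mul_zetaC_pow {m : ℕ} (a b : Fin m) :
    ∑ k ∈ range m, ((zetaC m ^ a.val)⁻¹ * zetaC m ^ b.val) ^ k = if a = b then (m : ℂ) else 0 := by
  have hm : m ≠ 0 := a.pos.ne'
  have hζ : IsPrimitiveRoot (zetaC m) m := Complex.isPrimitiveRoot_exp m hm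
  have hζ0 : zetaC m ≠ 0 := hζ.ne_zero hm
  split_ifs with hab
  · simp [hab, hζ0]
  have hw1 : (zetaC m ^ a.val)⁻¹ * zetaC m ^ b.val ≠ 1 := fun h => hab (Fin.ext
    (hζ.pow_inj a.isLt b.isLt (by rwa [inv_mul_eq_one₀ (pow_ne_zero _ hζ0)] at h)))
  have hwm : ((zetaC m ^ a.val)⁻¹ * zetaC m ^ b.val) ^ m = 1 := by
    rw [mul_pow, inv_pow, ← pow_mul, ← pow_mul, mul_comm _ m, mul_comm _ m, pow_mul, pow_mul,
      hζ.pow_eq_one, one_pow, one_pow, inv_one, one_mul]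
  rw [geom_sum_eq hw1, hwm, sub_self, zero_div]

/-- The unitary matrix `M* = m^{-1/2} (ζ^{ab})_{0 ≤ a,b ≤ m-1}`. -/
noncomputable def dftMatrix (m : ℕ) : Matrix (Fin m) (Fin m) ℂ :=
  ((Real.sqrt m : ℂ))⁻¹ • of fun a b => zetaC m ^ (a.val * b.val)

theorem dftMatrix_mem_unitaryGroup (m : ℕ) : dftMatrix m ∈ unitaryGroup (Fin m) ℂ := by
  rw [mem_unitaryGroup_iff']
  ext a b
  have hstar : star (zetaC m) = (zetaC m)⁻¹ := (Complex.inv_eq_conj (norm_zetaC m)).symm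
  have hc : star (Real.sqrt m : ℂ)⁻¹ * (Real.sqrt m : ℂ)⁻¹ = (m : ℂ)⁻¹ := by
    rw [star_inv₀, Complex.star_def, Complex.conj_ofReal, ← mul_inv, ← Complex.ofReal_mul,
      Real.mul_self_sqrt (Nat.cast_nonneg _), Complex.ofReal_natCast]
  calc (star (dftMatrix m) * dftMatrix m) a b
      = (m : ℂ)⁻¹ * ∑ k ∈ range m, ((zetaC m ^ a.val)⁻¹ * zetaC m ^ b.val) ^ k := by
        simp only [mul_apply, star_apply, dftMatrix, Matrix.smul_apply, of_apply, smul_eq_mul,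
          star_mul', star_pow, hstar]
        rw [← Fin.sum_univ_eq_sum_range (((zetaC m ^ a.val)⁻¹ * zetaC m ^ b.val) ^ ·), mul_sum]
        refine sum_congr rfl fun k _ => ?_
        rw [← hc]
        ring
    _ = (1 : Matrix (Fin m) (Fin m) ℂ) a b := by
        rw [sum_range_inv_zetaC_pow_mul_zetaC_pow, one_apply]
        split_ifs
        · exact inv_mul_cancel₀ (Nat.cast_ne_zero.2 a.pos.ne')
        · exact mul_zero _

theorem dftMatrix_add_row {m : ℕ} (t a b : Fin m) :
    dftMatrix m (t + a) b = zetaC m ^ (t.val * b.val) * dftMatrix m a b := by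
  simp only [dftMatrix, Matrix.smul_apply, of_apply, smul_eq_mul, Fin.val_add]
  have hζ := zetaC_pow_self m
  rw [pow_eq_pow_mod _ hζ, Nat.mod_mul_mod, ← pow_eq_pow_mod _ hζ]
  ring

theorem deltaMinorStar_eq_det_submatrix {m n : ℕ} {A B : Finset (Fin m)} (hA : #A = n)
    (hB : #B = n) :
    DeltaMinorStar m n A B hA hB
      = ((dftMatrix m).submatrix (A.orderEmbOfFin hA) (B.orderEmbOfFin hB)).det := by
  rw [dftMatrix, Matrix.submatrix_smul, Pi.smul_apply, Pi.smul_apply, det_smul, Fintype.card_fin]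
  rfl

theorem norm_deltaMinorStar_vadd {m n : ℕ} [NeZero m] (t : Fin m) {A B : Finset (Fin m)}
    (hA : #A = n) (hB : #B = n) (htA : #(t +ᵥ A) = n) :
    ‖DeltaMinorStar m n (t +ᵥ A) B htA hB‖ = ‖DeltaMinorStar m n A B hA hB‖ := by
  rw [deltaMinorStar_eq_det_submatrix, deltaMinorStar_eq_det_submatrix]
  set f : Fin n → Fin m := fun i => t + A.orderEmbOfFin hA i
  have hf : Function.Injective f := (add_right_injective t).comp (A.orderEmbOfFin hA).injective
  rw [← Tuple.comp_sort_eq_orderEmbOfFin hf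
    (fun i => vadd_mem_vadd_finset (orderEmbOfFin_mem A hA i)) htA]
  have hrow : (dftMatrix m).submatrix f (B.orderEmbOfFin hB) = of fun i j =>
      zetaC m ^ ((t : ℕ) * B.orderEmbOfFin hB j) *
        (dftMatrix m).submatrix (A.orderEmbOfFin hA) (B.orderEmbOfFin hB) i j := by
    ext i j
    exact dftMatrix_add_row _ _ _
  have hperm := det_permute (Tuple.sort f) ((dftMatrix m).submatrix f (B.orderEmbOfFin hB))
  rw [submatrix_submatrix, Function.comp_id] at hperm
  rw [hperm, hrow, det_mul_row, norm_mul, norm_mul, norm_prod]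
  simp [norm_zetaC, ← Int.cast_abs]

/-- `|Δ*_{A,B}|²`, extended by `0` to sets `A` of the wrong size. -/
noncomputable def normSqDeltaMinorStar {m n : ℕ} {B : Finset (Fin m)} (hB : #B = n)
    (A : Finset (Fin m)) : ℝ :=
  if hA : #A = n then ‖DeltaMinorStar m n A B hA hB‖ ^ 2 else 0

theorem sum_normSqDeltaMinorStar {m n : ℕ} {B : Finset (Fin m)} (hB : #B = n) :
    ∑ A, normSqDeltaMinorStar hB A = 1 := by
  rw [← sum_filter_of_ne (p := (#· = n)) (f := normSqDeltaMinorStar hB)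
      fun A _ hA => not_not.1 fun h => hA (dif_neg h),
    sum_subtype (p := (#· = n)) _ (fun A => by simp)]
  refine (sum_congr rfl fun A _ => ?_).trans
    (sum_norm_sq_det_submatrix_of_mem_unitaryGroup (dftMatrix_mem_unitaryGroup m) hB)
  rw [normSqDeltaMinorStar, dif_pos A.2, deltaMinorStar_eq_det_submatrix]

theorem normSqDeltaMinorStar_vadd {m n : ℕ} [NeZero m] {B : Finset (Fin m)} (hB : #B = n)
    (t : Fin m) (A : Finset (Fin m)) :
    normSqDeltaMinorStar hB (t +ᵥ A) = normSqDeltaMinorStar hB A := by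
  by_cases hA : #A = n
  · rw [normSqDeltaMinorStar, normSqDeltaMinorStar, dif_pos ((card_vadd_finset t A).trans hA),
      dif_pos hA, norm_deltaMinorStar_vadd t hA]
  · rw [normSqDeltaMinorStar, normSqDeltaMinorStar, dif_neg (by rwa [card_vadd_finset]),
      dif_neg hA]

/-- equation (5) in Zagier's proof. Let `m = n + κ`
(`n ≥ 1`, `κ ≥ 1`). For every `n`-element subset `B` of `{0, …, m-1}`:
`∑_{A ∈ Q₀} γ(A) |Δ*_{A,B}|² = (m - n)/m`, where `Q₀` consists of the
`n`-element subsets containing `0` and `γ(A) = m - 1 - max A`. -/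
theorem zagier_sum_gamma_abs_sq_deltaStar (n κ : ℕ) (hn : 1 ≤ n)
    (m : ℕ) (hm : m = n + κ)
    (B : Finset (Fin m)) (hB : B.card = n) :
    ∑ A : {A : Finset (Fin m) // A.card = n ∧ (⟨0, by omega⟩ : Fin m) ∈ A},
      ((m - 1 - ((A.1.max' ⟨_, A.2.2⟩ : Fin m) : ℕ) : ℕ) : ℝ) *
        ‖DeltaMinorStar m n A.1 B A.2.1 hB‖ ^ 2 =
      ((m - n : ℕ) : ℝ) / m := by
  have : NeZero m := ⟨by omega⟩
  have hcore := natCast_mul_sum_topGap_mul (by omega) (normSqDeltaMinorStar_vadd hB)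
    fun A hA => dif_neg hA
  rw [sum_normSqDeltaMinorStar, mul_one] at hcore
  rw [eq_div_iff (by simp [NeZero.ne m]), mul_comm, ← hcore]
  congr 1
  rw [← sum_filter_of_ne (p := (#· = n)) fun A _ hA => not_not.1 fun h =>
      hA (by rw [normSqDeltaMinorStar, dif_neg h, mul_zero]), filter_filter]
  refine ((sum_subtype _ (fun A => ?_) _).trans (sum_congr rfl fun A _ => ?_)).symm
  · simp [and_comm]
  · rw [topGap_eq_sub_max' ⟨_, A.2.2⟩, normSqDeltaMinorStar, dif_pos A.2.1]
end
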